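/- arXiv:math/0703227 — 10 statements merged into one kernel-verified Lean document; each statement's English description precedes it below -/
import Mathlib

section
/- The number of n×n magic squares with line sum t satisfies |Σ(n,t)| ≥ C(N+n−1, n−1)⁻² · C(N+n²−1, n²−1), where N = nt. -/
/-!
Every matrix with entry sum `N = n * t` lies in exactly one class `marginMatrices R C` of matrices
with row sums `R` and column sums `C`, and there are `C(N+n-1, n-1)²` such pairs `(R, C)`, so it
suffices that no class is larger than the class of magic squares.

Fix two rows `i, j` and their sum `w = D i + D j`. The number of ways to split `w` into rows with
sums `a` and `|w| - a` is the coefficient of `x^a` in `∏ c, (1 + x + ⋯ + x^(w c))`, which is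
symmetric and unimodal in `a`. Hence moving one unit of row sum from `i` to `j` when
`R j + 2 ≤ R i` does not shrink the class; repeating this makes all row sums equal to `t`, and by
transposition the column sums too.
-/

open Finset

def boxCount : List ℕ → ℤ → ℕ
  | [], a => if a = 0 then 1 else 0
  | w :: ws, a => ∑ k ∈ range (w + 1), boxCount ws (a - k)

theorem boxCount_sum_sub : ∀ (ws : List ℕ) (a : ℤ), boxCount ws (ws.sum - a) = boxCount ws a
  | [], a => by simp [boxCount]
  | w :: ws, a => by
    rw [boxCount, boxCount, ← sum_range_reflect]
    refine sum_congr rfl fun k hk => ?_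
    rw [← boxCount_sum_sub ws (a - k)]
    congr 1
    push_cast [Nat.le_of_lt_succ (mem_range.mp hk), List.sum_cons]
    ring

theorem Int.map_le_map_of_symm_of_le_succ {α : Type*} [Preorder α] {f : ℤ → α} {S : ℤ}
    (hsymm : ∀ a, f (S - a) = f a) (hstep : ∀ x, 2 * x + 1 ≤ S → f x ≤ f (x + 1))
    {a b : ℤ} (hab : a ≤ b) (hS : a + b ≤ S) : f a ≤ f b := by
  have hmono : ∀ b, a ≤ b → 2 * b ≤ S → f a ≤ f b := by
    intro b hab
    induction b, hab using Int.leInduction with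
    | base => exact fun _ => le_rfl
    | succ b _ ih => exact fun hb => (ih (by omega)).trans (hstep b (by omega))
  rcases le_or_gt (2 * b) S with hb | hb
  · exact hmono b hab hb
  · exact (hmono (S - b) (by omega) (by omega)).trans_eq (hsymm b)

theorem boxCount_le_add_one :
    ∀ (ws : List ℕ) (x : ℤ), 2 * x + 1 ≤ ws.sum → boxCount ws x ≤ boxCount ws (x + 1)
  | [], x, hx => by
    have : x ≠ 0 := by rw [List.sum_nil, Nat.cast_zero] at hx; omega
    simp [boxCount, this]
  | w :: ws, x, hx => by
    have htail : boxCount ws (x - w) ≤ boxCount ws (x + 1) :=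
      Int.map_le_map_of_symm_of_le_succ (boxCount_sum_sub ws)
        (boxCount_le_add_one ws) (by omega) (by rw [List.sum_cons, Nat.cast_add] at hx; omega)
    have hshift : ∑ k ∈ range w, boxCount ws (x + 1 - (k + 1 : ℕ)) =
        ∑ k ∈ range w, boxCount ws (x - k) :=
      sum_congr rfl fun k _ => by push_cast; ring_nf
    -- the windows `x - w, …, x` and `x + 1 - w, …, x + 1` share all but their end terms
    rw [boxCount, boxCount, sum_range_succ, sum_range_succ', hshift]
    simpa using htail

theorem boxCount_le (ws : List ℕ) {a b : ℤ} (hab : a ≤ b) (hS : a + b ≤ ws.sum) :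
    boxCount ws a ≤ boxCount ws b :=
  Int.map_le_map_of_symm_of_le_succ (boxCount_sum_sub ws) (boxCount_le_add_one ws) hab hS

def boxTuples {m : ℕ} (w : Fin m → ℕ) (a : ℤ) : Finset (Fin m → ℕ) :=
  {u ∈ Iic w | ∑ i, (u i : ℤ) = a}

theorem mem_boxTuples {m : ℕ} {w u : Fin m → ℕ} {a : ℤ} :
    u ∈ boxTuples w a ↔ u ≤ w ∧ ∑ i, (u i : ℤ) = a := by
  rw [boxTuples, mem_filter, mem_Iic]

theorem card_boxTuples : ∀ {m : ℕ} (w : Fin m → ℕ) (a : ℤ),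
    #(boxTuples w a) = boxCount (List.ofFn w) a
  | 0, w, a => by
    by_cases ha : a = 0 <;> simp [boxCount, boxTuples, ha, eq_comm, filter_true_of_mem, Pi.card_Iic]
  | m + 1, w, a => by
    rw [List.ofFn_succ, boxCount, card_eq_sum_card_fiberwise (f := fun u => u 0)
      (t := range (w 0 + 1)) fun u hu => mem_range_succ_iff.mpr ((mem_boxTuples.mp hu).1 0)]
    refine sum_congr rfl fun k hk => ?_
    rw [← card_boxTuples]
    refine card_nbij' Fin.tail (fun v => Fin.cons k v) (fun u hu => ?_) (fun v hv => ?_)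
      (fun u hu => ?_) (fun v _ => Fin.tail_cons _ _)
    · obtain ⟨hbox, rfl⟩ := mem_filter.mp (mem_coe.mp hu)
      obtain ⟨hle, hsum⟩ := mem_boxTuples.mp hbox
      rw [Fin.sum_univ_succ] at hsum
      exact mem_boxTuples.mpr ⟨fun i => hle i.succ, by simp [Fin.tail, ← hsum]⟩
    · obtain ⟨hle, hsum⟩ := mem_boxTuples.mp (mem_coe.mp hv)
      refine mem_filter.mpr ⟨mem_boxTuples.mpr ⟨fun i => ?_, ?_⟩, rfl⟩
      · cases i using Fin.cases
        · simpa using mem_range_succ_iff.mp hk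
        · simpa using hle _
      · simp [Fin.sum_univ_succ, hsum]
    · rw [← (mem_filter.mp (mem_coe.mp hu)).2]
      exact Fin.cons_self_tail u

theorem card_boxTuples_le_sub_one {m : ℕ} {w : Fin m → ℕ} {a : ℤ}
    (h : ∑ i, (w i : ℤ) + 1 ≤ 2 * a) : #(boxTuples w a) ≤ #(boxTuples w (a - 1)) := by
  have hsum : ((List.ofFn w).sum : ℤ) = ∑ i, (w i : ℤ) := by
    rw [List.sum_ofFn]; push_cast; rfl
  rw [card_boxTuples, card_boxTuples, ← boxCount_sum_sub _ a]
  exact boxCount_le _ (by omega) (by omega)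

theorem exists_injOn_boxTuples_sub_one {m : ℕ} {w : Fin m → ℕ} {a : ℤ}
    (h : ∑ i, (w i : ℤ) + 1 ≤ 2 * a) :
    ∃ e : (Fin m → ℕ) → Fin m → ℕ,
      Set.MapsTo e (boxTuples w a) (boxTuples w (a - 1)) ∧ Set.InjOn e (boxTuples w a) :=
  (boxTuples w a).finite_toSet.exists_injOn_of_encard_le
    (t := (boxTuples w (a - 1) : Set (Fin m → ℕ)))
    (by simp only [Set.encard_coe_eq_coe_finsetCard]; exact_mod_cast card_boxTuples_le_sub_one h)

theorem Finset.sum_update_update_add {ι M : Type*} [Fintype ι] [DecidableEq ι]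
    [AddCommMonoid M] (f : ι → M) {i j : ι} (hij : i ≠ j) (x y : M) :
    ∑ l, Function.update (Function.update f i x) j y l + (f i + f j) = ∑ l, f l + (x + y) := by
  have hupdate : ∀ (g : ι → M) (i : ι) (b : M),
      ∑ l, Function.update g i b l + g i = ∑ l, g l + b := fun g i b => by
    rw [sum_update_of_mem (mem_univ i), sum_eq_add_sum_sdiff_singleton_of_mem (mem_univ i) g]
    abel
  have hj := hupdate (Function.update f i x) j y
  rw [Function.update_of_ne hij.symm] at hj
  rw [add_comm (f i), ← add_assoc, hj, add_right_comm, hupdate, add_assoc]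

section Margins

variable {ι κ : Type*} [Fintype ι] [Fintype κ]

def marginMatrices (R : ι → ℕ) (C : κ → ℕ) : Set (Matrix ι κ ℕ) :=
  {D | (∀ i, ∑ j, D i j = R i) ∧ (∀ j, ∑ i, D i j = C j)}

theorem marginMatrices_finite (R : ι → ℕ) (C : κ → ℕ) : (marginMatrices R C).Finite := by
  classical
  refine (Set.finite_Iic (fun i (_ : κ) => R i)).subset fun D hD i j => ?_
  show D i j ≤ R i
  rw [← hD.1 i]
  exact single_le_sum (fun _ _ => Nat.zero_le _) (mem_univ j)

theorem ncard_marginMatrices_comm (R : ι → ℕ) (C : κ → ℕ) :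
    (marginMatrices C R).ncard = (marginMatrices R C).ncard :=
  Set.ncard_congr (fun D _ => D.transpose) (fun _ hD => ⟨hD.2, hD.1⟩)
    (fun _ _ _ _ h => Matrix.transpose_injective h)
    fun D hD => ⟨D.transpose, ⟨hD.2, hD.1⟩, rfl⟩

theorem row_mem_boxTuples {k : ℕ} {R : ι → ℕ} {C : Fin k → ℕ} {D : Matrix ι (Fin k) ℕ}
    (hD : D ∈ marginMatrices R C) (i j : ι) : D i ∈ boxTuples (D i + D j) (R i) :=
  mem_boxTuples.mpr ⟨le_self_add, by exact_mod_cast hD.1 i⟩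

theorem sum_add_rows {k : ℕ} {R : ι → ℕ} {C : Fin k → ℕ} {D : Matrix ι (Fin k) ℕ}
    (hD : D ∈ marginMatrices R C) (i j : ι) : ∑ c, (D i + D j) c = R i + R j := by
  rw [← hD.1 i, ← hD.1 j, ← sum_add_distrib]; rfl

end Margins

section Transfer

open Function

variable {ι : Type*} [DecidableEq ι] {k : ℕ} (e : (Fin k → ℕ) → (Fin k → ℕ) → Fin k → ℕ)
  {i j : ι}

def rowTransfer (i j : ι) (D : Matrix ι (Fin k) ℕ) : Matrix ι (Fin k) ℕ :=
  (D.updateRow i (e (D i + D j) (D i))).updateRow j (D i + D j - e (D i + D j) (D i))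

theorem rowTransfer_apply_left (hij : i ≠ j) (D : Matrix ι (Fin k) ℕ) :
    rowTransfer e i j D i = e (D i + D j) (D i) := by
  rw [rowTransfer, Matrix.updateRow_ne hij, Matrix.updateRow_self]

theorem rowTransfer_apply_right (D : Matrix ι (Fin k) ℕ) :
    rowTransfer e i j D j = D i + D j - e (D i + D j) (D i) :=
  Matrix.updateRow_self

theorem rowTransfer_apply_of_ne (D : Matrix ι (Fin k) ℕ) {l : ι} (hli : l ≠ i)
    (hlj : l ≠ j) :
    rowTransfer e i j D l = D l := by
  rw [rowTransfer, Matrix.updateRow_ne hlj, Matrix.updateRow_ne hli]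

variable [Fintype ι]

theorem sum_updateRow_updateRow_apply {κ : Type*} (D : Matrix ι κ ℕ) (hij : i ≠ j)
    {u v : κ → ℕ} (huv : u + v = D i + D j) (c : κ) :
    ∑ l, (D.updateRow i u).updateRow j v l c = ∑ l, D l c := by
  have hcol : ∀ l, (D.updateRow i u).updateRow j v l c =
      update (update (fun l => D l c) i (u c)) j (v c) l := fun l => by
    simp only [Matrix.updateRow_apply, update_apply]
  have h := sum_update_update_add (fun l => D l c) hij (u c) (v c)
  rw [← Pi.add_apply u, huv, Pi.add_apply] at h
  simpa only [hcol] using add_right_cancel h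

variable {R : ι → ℕ} {C : Fin k → ℕ}

theorem mapsTo_rowTransfer (hij : i ≠ j) (he : ∀ w : Fin k → ℕ, ∑ c, w c = R i + R j →
      Set.MapsTo (e w) (boxTuples w (R i)) (boxTuples w (R i - 1))) :
    Set.MapsTo (rowTransfer e i j) (marginMatrices R C)
      (marginMatrices (update (update R i (R i - 1)) j (R j + 1)) C) := by
  intro D hD
  obtain ⟨hle, hsum⟩ := mem_boxTuples.mp (he _ (sum_add_rows hD i j) (row_mem_boxTuples hD i j))
  have hsplit : e (D i + D j) (D i) + (D i + D j - e (D i + D j) (D i)) = D i + D j :=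
    add_tsub_cancel_of_le hle
  refine ⟨fun l => ?_, fun c => ?_⟩
  · have hsum_u : ((∑ c, e (D i + D j) (D i) c : ℕ) : ℤ) = R i - 1 := by
      push_cast; exact hsum
    have htotal := congrArg (fun f : Fin k → ℕ => ∑ c, f c) hsplit
    simp only [Pi.add_apply, sum_add_distrib, hD.1 i, hD.1 j] at htotal
    rcases eq_or_ne l j with rfl | hlj
    · rw [rowTransfer_apply_right, update_self]
      omega
    rcases eq_or_ne l i with rfl | hli
    · rw [rowTransfer_apply_left e hij, update_of_ne hlj, update_self]
      omega
    · rw [rowTransfer_apply_of_ne e D hli hlj, update_of_ne hlj, update_of_ne hli]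
      exact hD.1 l
  · exact (sum_updateRow_updateRow_apply D hij hsplit c).trans (hD.2 c)

theorem injOn_rowTransfer (hij : i ≠ j) (he : ∀ w : Fin k → ℕ, ∑ c, w c = R i + R j →
      Set.MapsTo (e w) (boxTuples w (R i)) (boxTuples w (R i - 1)) ∧
        Set.InjOn (e w) (boxTuples w (R i))) :
    Set.InjOn (rowTransfer e i j) (marginMatrices R C) := by
  intro D₁ h₁ D₂ h₂ h
  have hpair : ∀ D ∈ marginMatrices R C,
      rowTransfer e i j D i + rowTransfer e i j D j = D i + D j := fun D hD => by
      rw [rowTransfer_apply_left e hij, rowTransfer_apply_right]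
      exact add_tsub_cancel_of_le
        (mem_boxTuples.mp ((he _ (sum_add_rows hD i j)).1 (row_mem_boxTuples hD i j))).1
  have hw : D₁ i + D₁ j = D₂ i + D₂ j := by rw [← hpair D₁ h₁, ← hpair D₂ h₂, h]
  have hi : D₁ i = D₂ i := by
    have hleft := congrFun h i
    rw [rowTransfer_apply_left e hij, rowTransfer_apply_left e hij, hw] at hleft
    exact (he _ (sum_add_rows h₂ i j)).2 (hw ▸ row_mem_boxTuples h₁ i j)
      (row_mem_boxTuples h₂ i j) hleft
  have hj : D₁ j = D₂ j := add_left_cancel (hi ▸ hw)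
  funext l
  rcases eq_or_ne l i with rfl | hli
  · exact hi
  rcases eq_or_ne l j with rfl | hlj
  · exact hj
  · rw [← rowTransfer_apply_of_ne e D₁ hli hlj, ← rowTransfer_apply_of_ne e D₂ hli hlj, h]

theorem ncard_marginMatrices_le_update (hij : i ≠ j) (hR : R j + 2 ≤ R i) :
    (marginMatrices R C).ncard ≤
      (marginMatrices (update (update R i (R i - 1)) j (R j + 1)) C).ncard := by
  have hbox : ∀ w : Fin k → ℕ, ∃ e : (Fin k → ℕ) → Fin k → ℕ,
      ∑ c, w c = R i + R j →
        Set.MapsTo e (boxTuples w (R i)) (boxTuples w (R i - 1)) ∧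
        Set.InjOn e (boxTuples w (R i)) := fun w => by
    by_cases hw : ∑ c, w c = R i + R j
    · have hw' : ∑ c, (w c : ℤ) = R i + R j := by exact_mod_cast hw
      obtain ⟨e, he⟩ := exists_injOn_boxTuples_sub_one (w := w) (a := R i) (by omega)
      exact ⟨e, fun _ => he⟩
    · exact ⟨id, fun h => absurd h hw⟩
  choose e he using hbox
  exact Set.ncard_le_ncard_of_injOn _ (mapsTo_rowTransfer e hij fun w hw => (he w hw).1)
    (injOn_rowTransfer e hij he) (marginMatrices_finite _ _)

end Transfer

theorem ncard_marginMatrices_le_const_rows {ι : Type*} [Fintype ι] {k t : ℕ} {R : ι → ℕ}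
    {C : Fin k → ℕ} (hR : ∑ l, R l = Fintype.card ι * t) :
    (marginMatrices R C).ncard ≤ (marginMatrices (fun _ : ι => t) C).ncard := by
  classical
  have hconst : ∑ _l : ι, t = Fintype.card ι * t := by simp
  -- moving a unit from a row above the mean to a row below it lowers the excess by one
  induction hm : ∑ l, (R l - t) generalizing R with
  | zero =>
    have hle : ∀ l ∈ univ, R l ≤ t := fun l _ => Nat.sub_eq_zero_iff_le.mp
      ((sum_eq_zero_iff.mp hm) l (mem_univ l))
    rw [show R = fun _ => t from funext fun l =>
      (sum_eq_sum_iff_of_le hle).mp (hR.trans hconst.symm) l (mem_univ l)]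
  | succ m ih =>
    obtain ⟨i, -, hi⟩ := exists_ne_zero_of_sum_ne_zero (hm.trans_ne m.succ_ne_zero)
    obtain ⟨j, hj⟩ : ∃ j, R j < t := by
      by_contra! hge
      have := sum_lt_sum (fun l _ => hge l) ⟨i, mem_univ i, Nat.lt_of_sub_ne_zero hi⟩
      omega
    have hij : i ≠ j := by rintro rfl; omega
    refine (ncard_marginMatrices_le_update hij (by omega)).trans (ih ?_ ?_)
    · have := sum_update_update_add R hij (R i - 1) (R j + 1)
      omega
    · have hexcess : ∀ l, Function.update (Function.update R i (R i - 1)) j (R j + 1) l - t =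
          Function.update (Function.update (fun l => R l - t) i (R i - 1 - t)) j 0 l :=
        fun l => by simp only [Function.update_apply]; split_ifs <;> omega
      have := sum_update_update_add (fun l => R l - t) hij (R i - 1 - t) 0
      simp only [hexcess]
      omega

theorem ncard_marginMatrices_le_const {m k r c : ℕ} {R : Fin m → ℕ} {C : Fin k → ℕ}
    (hR : ∑ i, R i = m * r) (hC : ∑ j, C j = k * c) :
    (marginMatrices R C).ncard ≤
      (marginMatrices (fun _ : Fin m => r) (fun _ : Fin k => c)).ncard :=
  calc (marginMatrices R C).ncard
      ≤ (marginMatrices (fun _ => r) C).ncard :=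
        ncard_marginMatrices_le_const_rows (by simpa using hR)
    _ = (marginMatrices C fun _ => r).ncard := (ncard_marginMatrices_comm _ _).symm
    _ ≤ (marginMatrices (fun _ => c) fun _ => r).ncard :=
        ncard_marginMatrices_le_const_rows (by simpa using hC)
    _ = _ := ncard_marginMatrices_comm _ _

section Counting

variable {ι κ : Type*} [Fintype ι] [Fintype κ]

theorem finite_setOf_sum_eq (N : ℕ) : {f : ι → ℕ | ∑ i, f i = N}.Finite := by
  classical exact Set.finite_coe_iff.mp (Finite.of_equiv _ (Sym.equivNatSumOfFintype ι N))

theorem ncard_setOf_sum_eq (N : ℕ) :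
    {f : ι → ℕ | ∑ i, f i = N}.ncard = (Fintype.card ι).multichoose N := by
  classical
  rw [← Nat.card_coe_set_eq, ← Sym.card_sym_eq_multichoose, ← Nat.card_eq_fintype_card]
  exact (Nat.card_congr (Sym.equivNatSumOfFintype ι N)).symm

theorem ncard_setOf_matrix_sum_eq (N : ℕ) :
    {D : Matrix ι κ ℕ | ∑ i, ∑ j, D i j = N}.ncard =
      (Fintype.card ι * Fintype.card κ).multichoose N := by
  rw [← Fintype.card_prod, ← ncard_setOf_sum_eq N]
  refine Set.ncard_congr (fun D _ => Function.uncurry D) (fun D hD => ?_)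
    (fun _ _ _ _ h => Function.uncurry_injective h) fun f hf => ⟨Function.curry f, ?_, ?_⟩
  · exact (Fintype.sum_prod_type _).trans hD
  · exact (Fintype.sum_prod_type f).symm.trans hf
  · exact Function.uncurry_curry f

theorem ncard_setOf_matrix_sum_eq_le {N B : ℕ}
    (hB : ∀ (R : ι → ℕ) (C : κ → ℕ), ∑ i, R i = N → ∑ j, C j = N →
      (marginMatrices R C).ncard ≤ B) :
    {D : Matrix ι κ ℕ | ∑ i, ∑ j, D i j = N}.ncard ≤
      (Fintype.card ι).multichoose N * (Fintype.card κ).multichoose N * B := by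
  set P := {R : ι → ℕ | ∑ i, R i = N} ×ˢ {C : κ → ℕ | ∑ j, C j = N}
  have hP : P.Finite := (finite_setOf_sum_eq N).prod (finite_setOf_sum_eq N)
  have hcover : {D : Matrix ι κ ℕ | ∑ i, ∑ j, D i j = N} ⊆
      ⋃ p ∈ hP.toFinset, marginMatrices p.1 p.2 := fun D hD =>
    Set.mem_biUnion (x := (fun i => ∑ j, D i j, fun j => ∑ i, D i j))
      (hP.mem_toFinset.mpr ⟨hD, (sum_comm.trans hD :)⟩) ⟨fun _ => rfl, fun _ => rfl⟩
  calc _ ≤ (⋃ p ∈ hP.toFinset, marginMatrices p.1 p.2).ncard :=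
        Set.ncard_le_ncard hcover
          (hP.toFinset.finite_toSet.biUnion fun p _ => marginMatrices_finite p.1 p.2)
    _ ≤ ∑ p ∈ hP.toFinset, (marginMatrices p.1 p.2).ncard := set_ncard_biUnion_le _ _
    _ ≤ #hP.toFinset * B := by
        refine (sum_le_card_nsmul _ _ B fun p hp => ?_).trans_eq (smul_eq_mul _ _)
        obtain ⟨hR, hC⟩ := hP.mem_toFinset.mp hp
        exact hB p.1 p.2 hR hC
    _ = _ := by
        rw [← Set.ncard_eq_toFinset_card P hP, Set.ncard_prod, ncard_setOf_sum_eq,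
          ncard_setOf_sum_eq]

end Counting

theorem Nat.multichoose_eq_choose_pred {n : ℕ} (hn : 0 < n) (k : ℕ) :
    n.multichoose k = (k + n - 1).choose (n - 1) := by
  rw [Nat.multichoose_eq, show n + k - 1 = k + (n - 1) by omega,
    show k + n - 1 = k + (n - 1) by omega, Nat.choose_symm_add]

theorem magic_squares_lower_bound_general (n t : ℕ) (hn : 0 < n) :
    ((Nat.choose (n * t + n - 1) (n - 1) : ℝ))⁻¹ ^ 2 *
        Nat.choose (n * t + n ^ 2 - 1) (n ^ 2 - 1) ≤
      (Set.ncard {D : Matrix (Fin n) (Fin n) ℕ |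
        (∀ i, ∑ j, D i j = t) ∧ (∀ j, ∑ i, D i j = t)} : ℝ) := by
  have hcount := ncard_setOf_matrix_sum_eq_le (ι := Fin n) (κ := Fin n) (N := n * t)
    fun R C hR hC => ncard_marginMatrices_le_const hR hC
  rw [ncard_setOf_matrix_sum_eq] at hcount
  simp only [Fintype.card_fin, ← sq, Nat.multichoose_eq_choose_pred hn,
    Nat.multichoose_eq_choose_pred (pow_pos hn 2)] at hcount
  have hpos : (0 : ℝ) < (n * t + n - 1).choose (n - 1) := by
    exact_mod_cast Nat.choose_pos (by omega)
  rw [inv_pow, inv_mul_le_iff₀ (pow_pos hpos 2)]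
  exact_mod_cast hcount

/-- The number of `n × n` magic squares with line sum `t` satisfies
`|Σ(n,t)| ≥ C(N+n−1, n−1)⁻² · C(N+n²−1, n²−1)` where `N = n * t`. -/
theorem magic_squares_lower_bound (n t : ℕ) (hn : 0 < n) (ht : 0 < t) :
    ((Nat.choose (n * t + n - 1) (n - 1) : ℝ))⁻¹ ^ 2 *
        Nat.choose (n * t + n ^ 2 - 1) (n ^ 2 - 1) ≤
      (Set.ncard {D : Matrix (Fin n) (Fin n) ℕ |
        (∀ i, ∑ j, D i j = t) ∧ (∀ j, ∑ i, D i j = t)} : ℝ) :=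
  magic_squares_lower_bound_general n t hn
end

section
/- Let A be an n×n positive matrix with Σ_{i,j} a_{ij} = n, and let B be its doubly stochastic scaling (so a_{ij} = b_{ij} λᵢ μⱼ for some positive λᵢ, μⱼ, and B is doubly stochastic). Then Σ_{i,j} ln b_{ij} ≥ Σ_{i,j} ln a_{ij}. -/
open Finset

/-!
Write `x i = log λᵢ` and `y j = log μⱼ`. Taking logarithms of `a_{ij} = b_{ij} λᵢ μⱼ` and summing
gives `Σ log a = Σ log b + n (Σ x + Σ y)`, so it suffices to show `Σ x + Σ y ≤ 0`. Because `B` is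
doubly stochastic, `Σ x + Σ y = Σ_{ij} b_{ij} log (λᵢ μⱼ)`, and `log t ≤ t - 1` bounds this by
`Σ_{ij} b_{ij} λᵢ μⱼ - Σ_{ij} b_{ij} = Σ a - n = 0`.
-/

section DoublyStochastic

variable {R ι : Type*} [Fintype ι] [DecidableEq ι]

theorem sum_sum_of_mem_doublyStochastic [Semiring R] [PartialOrder R] [IsOrderedRing R]
    {B : Matrix ι ι R} (hB : B ∈ doublyStochastic R ι) :
    ∑ i, ∑ j, B i j = Fintype.card ι := by
  simp [sum_row_of_mem_doublyStochastic hB]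

theorem sum_sum_mul_add_of_mem_doublyStochastic [CommSemiring R] [PartialOrder R]
    [IsOrderedRing R] {B : Matrix ι ι R} (hB : B ∈ doublyStochastic R ι) (x y : ι → R) :
    ∑ i, ∑ j, B i j * (x i + y j) = ∑ i, x i + ∑ j, y j := by
  simp only [mul_add, sum_add_distrib]
  rw [sum_comm (f := fun i j => B i j * y j)]
  simp only [← sum_mul, sum_row_of_mem_doublyStochastic hB,
    sum_col_of_mem_doublyStochastic hB, one_mul]

theorem sum_log_add_sum_log_le_of_mem_doublyStochastic {B : Matrix ι ι ℝ}
    (hB : B ∈ doublyStochastic ℝ ι) {lam mu : ι → ℝ} (hlam : ∀ i, 0 < lam i)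
    (hmu : ∀ j, 0 < mu j) :
    ∑ i, Real.log (lam i) + ∑ j, Real.log (mu j) ≤
      ∑ i, ∑ j, B i j * lam i * mu j - Fintype.card ι :=
  calc ∑ i, Real.log (lam i) + ∑ j, Real.log (mu j)
      = ∑ i, ∑ j, B i j * Real.log (lam i * mu j) := by
        rw [← sum_sum_mul_add_of_mem_doublyStochastic hB]
        simp only [Real.log_mul (hlam _).ne' (hmu _).ne']
    _ ≤ ∑ i, ∑ j, B i j * (lam i * mu j - 1) := by
        gcongr with i _ j _
        · exact nonneg_of_mem_doublyStochastic hB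
        · exact Real.log_le_sub_one_of_pos (mul_pos (hlam i) (hmu j))
    _ = ∑ i, ∑ j, B i j * lam i * mu j - Fintype.card ι := by
        rw [← sum_sum_of_mem_doublyStochastic hB, ← sum_sub_distrib]
        simp only [← sum_sub_distrib, mul_sub, mul_one, mul_assoc]

end DoublyStochastic

theorem sum_sum_log_of_eq_mul_mul {ι κ : Type*} [Fintype ι] [Fintype κ]
    {A B : Matrix ι κ ℝ} {lam : ι → ℝ} {mu : κ → ℝ} (hB : ∀ i j, B i j ≠ 0)
    (hlam : ∀ i, lam i ≠ 0) (hmu : ∀ j, mu j ≠ 0) (hscal : ∀ i j, A i j = B i j * lam i * mu j) :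
    ∑ i, ∑ j, Real.log (A i j) = ∑ i, ∑ j, Real.log (B i j) +
      Fintype.card κ * ∑ i, Real.log (lam i) + Fintype.card ι * ∑ j, Real.log (mu j) := by
  simp only [hscal, Real.log_mul (mul_ne_zero (hB _ _) (hlam _)) (hmu _),
    Real.log_mul (hB _ _) (hlam _), sum_add_distrib, sum_const, card_univ, nsmul_eq_mul]
  simp only [mul_sum]

theorem log_sum_scaling_ge_general (n : ℕ)
    (A B : Matrix (Fin n) (Fin n) ℝ) (lam mu : Fin n → ℝ)
    (hApos : ∀ i j, 0 < A i j)
    (hAsum : ∑ i, ∑ j, A i j = n)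
    (hlam : ∀ i, 0 < lam i) (hmu : ∀ j, 0 < mu j)
    (hscal : ∀ i j, A i j = B i j * lam i * mu j)
    (hBrow : ∀ i, ∑ j, B i j = 1) (hBcol : ∀ j, ∑ i, B i j = 1) :
    ∑ i, ∑ j, Real.log (A i j) ≤ ∑ i, ∑ j, Real.log (B i j) := by
  have hBpos : ∀ i j, 0 < B i j := fun i j =>
    pos_of_mul_pos_left (pos_of_mul_pos_left ((hscal i j) ▸ hApos i j) (hmu j).le) (hlam i).le
  have hB : B ∈ doublyStochastic ℝ (Fin n) :=
    mem_doublyStochastic_iff_sum.2 ⟨fun i j => (hBpos i j).le, hBrow, hBcol⟩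
  have hlog_le : ∑ i, Real.log (lam i) + ∑ j, Real.log (mu j) ≤ 0 := by
    simpa [← hscal, hAsum] using sum_log_add_sum_log_le_of_mem_doublyStochastic hB hlam hmu
  rw [sum_sum_log_of_eq_mul_mul (fun i j => (hBpos i j).ne') (fun i => (hlam i).ne')
    (fun j => (hmu j).ne') hscal, Fintype.card_fin, add_assoc, ← mul_add]
  exact add_le_of_nonpos_right (mul_nonpos_of_nonneg_of_nonpos n.cast_nonneg hlog_le)

/-- If `A` is an `n × n` positive matrix with entry sum `n` and `B` is its
doubly stochastic scaling (`a_{ij} = b_{ij} λᵢ μⱼ`), then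
`Σ_{i,j} ln b_{ij} ≥ Σ_{i,j} ln a_{ij}`. -/
theorem log_sum_scaling_ge (n : ℕ) (hn : 0 < n)
    (A B : Matrix (Fin n) (Fin n) ℝ) (lam mu : Fin n → ℝ)
    (hApos : ∀ i j, 0 < A i j)
    (hAsum : ∑ i, ∑ j, A i j = n)
    (hlam : ∀ i, 0 < lam i) (hmu : ∀ j, 0 < mu j)
    (hscal : ∀ i j, A i j = B i j * lam i * mu j)
    (hBnonneg : ∀ i j, 0 ≤ B i j)
    (hBrow : ∀ i, ∑ j, B i j = 1) (hBcol : ∀ j, ∑ i, B i j = 1) :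
    ∑ i, ∑ j, Real.log (A i j) ≤ ∑ i, ∑ j, Real.log (B i j) :=
  log_sum_scaling_ge_general n A B lam mu hApos hAsum hlam hmu hscal hBrow hBcol
end

section
/- Let A be an n×n positive matrix. Its doubly stochastic scaling B is the unique minimizer of the function X ↦ Σ_{i,j} x_{ij}(ln x_{ij} − ln a_{ij}) over the set of n×n doubly stochastic matrices X. -/
open Finset

/-- Pointwise Gibbs inequality: `x - b ≤ x (log x - log b)`, strict when `x ≠ b`. -/
lemma gibbs_pointwise (b x : ℝ) (hb : 0 < b) (hx : 0 ≤ x) :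
    x - b ≤ x * (Real.log x - Real.log b) ∧
      (x ≠ b → x - b < x * (Real.log x - Real.log b)) := by
  rcases eq_or_lt_of_le hx with h0 | hxpos
  · refine ⟨by simp [← h0]; linarith, fun _ => ?_⟩
    simp [← h0]; linarith
  · have hbx : 0 < b / x := div_pos hb hxpos
    have hlog : Real.log (b / x) ≤ b / x - 1 := Real.log_le_sub_one_of_pos hbx
    have hsplit : Real.log (b / x) = Real.log b - Real.log x :=
      Real.log_div (ne_of_gt hb) (ne_of_gt hxpos)
    constructor
    · have := mul_le_mul_of_nonneg_left hlog (le_of_lt hxpos)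
      rw [hsplit] at this
      have hx' : x * (b / x - 1) = b - x := by field_simp
      nlinarith
    · intro hne
      have hne1 : b / x ≠ 1 := by
        intro h
        exact hne (by field_simp at h; linarith)
      have hlt : Real.log (b / x) < b / x - 1 := Real.log_lt_sub_one_of_pos hbx hne1
      have := mul_lt_mul_of_pos_left hlt hxpos
      rw [hsplit] at this
      have hx' : x * (b / x - 1) = b - x := by field_simp
      nlinarith

/-- The doubly stochastic scaling `B` of a positive matrix `A` is the unique
minimizer of `X ↦ Σ_{i,j} x_{ij} (ln x_{ij} − ln a_{ij})` over doubly stochastic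
matrices (with the convention `0 · ln 0 = 0`, which holds since `Real.log 0 = 0`). -/
theorem scaling_minimizes_entropy (n : ℕ) (hn : 0 < n)
    (A B : Matrix (Fin n) (Fin n) ℝ) (lam mu : Fin n → ℝ)
    (hApos : ∀ i j, 0 < A i j)
    (hlam : ∀ i, 0 < lam i) (hmu : ∀ j, 0 < mu j)
    (hscal : ∀ i j, A i j = B i j * lam i * mu j)
    (hBnonneg : ∀ i j, 0 ≤ B i j)
    (hBrow : ∀ i, ∑ j, B i j = 1) (hBcol : ∀ j, ∑ i, B i j = 1) :
    ∀ X : Matrix (Fin n) (Fin n) ℝ, (∀ i j, 0 ≤ X i j) →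
      (∀ i, ∑ j, X i j = 1) → (∀ j, ∑ i, X i j = 1) → X ≠ B →
      ∑ i, ∑ j, B i j * (Real.log (B i j) - Real.log (A i j)) <
        ∑ i, ∑ j, X i j * (Real.log (X i j) - Real.log (A i j)) := by
  intro X hXnonneg hXrow hXcol hXne
  have hBpos : ∀ i j, 0 < B i j := by
    intro i j
    have hA := hApos i j
    rw [hscal i j] at hA
    have := mul_pos (hlam i) (hmu j)
    nlinarith
  have hlogA : ∀ i j, Real.log (A i j) =
      Real.log (B i j) + Real.log (lam i) + Real.log (mu j) := by
    intro i j
    rw [hscal i j, Real.log_mul (mul_pos (hBpos i j) (hlam i)).ne' (ne_of_gt (hmu j)),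
      Real.log_mul (ne_of_gt (hBpos i j)) (ne_of_gt (hlam i))]
  -- expansion lemma for any doubly stochastic matrix
  have expand : ∀ Y : Matrix (Fin n) (Fin n) ℝ,
      (∀ i, ∑ j, Y i j = 1) → (∀ j, ∑ i, Y i j = 1) →
      ∑ i, ∑ j, Y i j * (Real.log (Y i j) - Real.log (A i j)) =
        (∑ i, ∑ j, Y i j * (Real.log (Y i j) - Real.log (B i j)))
          - (∑ i, Real.log (lam i)) - (∑ j, Real.log (mu j)) := by
    intro Y hYr hYc
    have h1 : ∀ i j, Y i j * (Real.log (Y i j) - Real.log (A i j)) =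
        Y i j * (Real.log (Y i j) - Real.log (B i j))
          - Y i j * Real.log (lam i) - Y i j * Real.log (mu j) := by
      intro i j; rw [hlogA i j]; ring
    simp only [h1, Finset.sum_sub_distrib]
    have h2 : ∑ i, ∑ j, Y i j * Real.log (lam i) = ∑ i, Real.log (lam i) := by
      refine Finset.sum_congr rfl fun i _ => ?_
      rw [← Finset.sum_mul, hYr i, one_mul]
    have h3 : ∑ i, ∑ j, Y i j * Real.log (mu j) = ∑ j, Real.log (mu j) := by
      rw [Finset.sum_comm]
      refine Finset.sum_congr rfl fun j _ => ?_
      rw [← Finset.sum_mul, hYc j, one_mul]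
    rw [h2, h3]
  rw [expand X hXrow hXcol, expand B hBrow hBcol]
  have hBzero : ∑ i, ∑ j, B i j * (Real.log (B i j) - Real.log (B i j)) = 0 := by
    simp
  rw [hBzero]
  have key : (0 : ℝ) < ∑ i, ∑ j, X i j * (Real.log (X i j) - Real.log (B i j)) := by
    have hsum0 : ∑ p : Fin n × Fin n, (X p.1 p.2 - B p.1 p.2) = 0 := by
      rw [Fintype.sum_prod_type]
      simp only [Finset.sum_sub_distrib, hXrow, hBrow]
      simp
    have hdiff : ∃ p : Fin n × Fin n, X p.1 p.2 ≠ B p.1 p.2 := by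
      by_contra h
      push_neg at h
      exact hXne (by ext i j; exact h (i, j))
    obtain ⟨p0, hp0⟩ := hdiff
    have hlt : ∑ p : Fin n × Fin n, (X p.1 p.2 - B p.1 p.2) <
        ∑ p : Fin n × Fin n, X p.1 p.2 * (Real.log (X p.1 p.2) - Real.log (B p.1 p.2)) := by
      apply Finset.sum_lt_sum
      · intro p _
        exact (gibbs_pointwise (B p.1 p.2) (X p.1 p.2) (hBpos p.1 p.2) (hXnonneg p.1 p.2)).1
      · exact ⟨p0, Finset.mem_univ _,
          (gibbs_pointwise (B p0.1 p0.2) (X p0.1 p0.2) (hBpos p0.1 p0.2)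
            (hXnonneg p0.1 p0.2)).2 hp0⟩
    rw [hsum0] at hlt
    exact lt_of_lt_of_eq hlt (Fintype.sum_prod_type _)
  linarith
end

section
/- Let A = (a_{ij}) be an n×n positive matrix (n ≥ 3) and let B = (b_{ij}) be its doubly stochastic scaling. Then for all indices k, l: ln b_{kl} ≤ ln a_{kl} − (1/(n−2)) Σ_{j≠l} ln a_{kj} − (1/(n−2)) Σ_{i≠k} ln a_{il} + (n/(n−2)) ln((1/n) Σ_{i,j} a_{ij}) − ((2n−2)/(n−2)) ln(n−1). -/
open Finset

/-!
Write `a_{ij} = b_{ij} λ_i μ_j`. In the claimed bound the terms `ln λ_k` and `ln μ_l` cancel, and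
the difference of the two sides becomes `1/(n-2)` times a sum of three nonnegative gaps. Two of
them are AM–GM: the entries of row `k` of `B` other than `b_{kl}` are `n - 1` positive numbers with
sum at most `1`, so `Σ_{j≠l} ln b_{kj} ≤ -(n-1) ln(n-1)`, and likewise for column `l`. The third is
Jensen's inequality for `ln` with the weights `b_{ij}/n`, which sum to `1` because `B` is doubly
stochastic: `Σ ln λ_i + Σ ln μ_j = Σ (b_{ij}/n) ln(λ_i μ_j) · n ≤ n ln((1/n) Σ a_{ij})`.
-/

namespace Real

theorem sum_mul_log_le_log_sum_mul {ι : Type*} {s : Finset ι} {w x : ι → ℝ}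
    (hw : ∀ i ∈ s, 0 ≤ w i) (hw1 : ∑ i ∈ s, w i = 1) (hx : ∀ i ∈ s, 0 < x i) :
    ∑ i ∈ s, w i * log (x i) ≤ log (∑ i ∈ s, w i * x i) := by
  simpa only [smul_eq_mul] using strictConcaveOn_log_Ioi.concaveOn.le_map_sum hw hw1 hx

theorem sum_log_le_card_mul_log_div {ι : Type*} {s : Finset ι} {x : ι → ℝ} {c : ℝ}
    (hx : ∀ i ∈ s, 0 < x i) (hc : ∑ i ∈ s, x i ≤ c) :
    ∑ i ∈ s, log (x i) ≤ #s * log (c / #s) := by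
  rcases s.eq_empty_or_nonempty with rfl | hs
  · simp
  have hcard : (0 : ℝ) < #s := by exact_mod_cast hs.card_pos
  have hjensen := sum_mul_log_le_log_sum_mul (w := fun _ => (#s : ℝ)⁻¹)
    (fun _ _ => by positivity) (by simp [hcard.ne']) hx
  rw [← mul_sum, ← mul_sum] at hjensen
  have hpos := sum_pos hx hs
  calc ∑ i ∈ s, log (x i) = #s * ((#s : ℝ)⁻¹ * ∑ i ∈ s, log (x i)) := by field_simp
    _ ≤ #s * log ((#s : ℝ)⁻¹ * ∑ i ∈ s, x i) := by gcongr
    _ ≤ #s * log (c / #s) := by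
        rw [inv_mul_eq_div]
        gcongr

theorem sum_erase_log_le_of_sum_eq_one {ι : Type*} [Fintype ι] [DecidableEq ι] {x : ι → ℝ}
    (hx : ∀ i, 0 < x i) (hsum : ∑ i, x i = 1) (l : ι) :
    ∑ i ∈ univ.erase l, log (x i) ≤ -((Fintype.card ι - 1 : ℝ) * log (Fintype.card ι - 1)) := by
  have hle : ∑ i ∈ univ.erase l, x i ≤ 1 := by
    rw [sum_erase_eq_sub (mem_univ l), hsum]
    linarith [hx l]
  have hcard : (#(univ.erase l) : ℝ) = Fintype.card ι - 1 := by
    rw [card_erase_of_mem (mem_univ l), card_univ, Nat.cast_pred (Fintype.card_pos_iff.mpr ⟨l⟩)]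
  have hamgm := sum_log_le_card_mul_log_div (fun i _ => hx i) hle
  rwa [hcard, one_div, log_inv, mul_neg] at hamgm

end Real

open Real

namespace DiagonalScaling

variable {ι : Type*} {A B : Matrix ι ι ℝ} {lam mu : ι → ℝ}

theorem entry_pos (hApos : ∀ i j, 0 < A i j) (hlam : ∀ i, 0 < lam i) (hmu : ∀ j, 0 < mu j)
    (hscal : ∀ i j, A i j = B i j * lam i * mu j) (i j : ι) : 0 < B i j := by
  have : 0 < B i j * (lam i * mu j) := by rw [← mul_assoc, ← hscal]; exact hApos i j
  exact pos_of_mul_pos_left this (mul_pos (hlam i) (hmu j)).le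

variable (hApos : ∀ i j, 0 < A i j) (hlam : ∀ i, 0 < lam i) (hmu : ∀ j, 0 < mu j)
  (hscal : ∀ i j, A i j = B i j * lam i * mu j)
include hApos hlam hmu hscal

theorem log_eq (i j : ι) : log (A i j) = log (B i j) + log (lam i) + log (mu j) := by
  have hB := entry_pos hApos hlam hmu hscal i j
  rw [hscal, log_mul (mul_pos hB (hlam i)).ne' (hmu j).ne', log_mul hB.ne' (hlam i).ne']

theorem sum_log_row (k : ι) (s : Finset ι) :
    ∑ j ∈ s, log (A k j) = ∑ j ∈ s, log (B k j) + #s * log (lam k) + ∑ j ∈ s, log (mu j) := by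
  simp only [log_eq hApos hlam hmu hscal, sum_add_distrib, sum_const, nsmul_eq_mul]

theorem sum_log_col (l : ι) (s : Finset ι) :
    ∑ i ∈ s, log (A i l) = ∑ i ∈ s, log (B i l) + ∑ i ∈ s, log (lam i) + #s * log (mu l) := by
  simp only [log_eq hApos hlam hmu hscal, sum_add_distrib, sum_const, nsmul_eq_mul]

theorem sum_log_add_sum_log_le [Fintype ι] (hBrow : ∀ i, ∑ j, B i j = 1)
    (hBcol : ∀ j, ∑ i, B i j = 1) :
    ∑ i, log (lam i) + ∑ j, log (mu j) ≤
      Fintype.card ι * log ((1 / Fintype.card ι) * ∑ i, ∑ j, A i j) := by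
  rcases isEmpty_or_nonempty ι with hι | hι
  · simp
  have hN : (0 : ℝ) < Fintype.card ι := by exact_mod_cast Fintype.card_pos
  have hB := entry_pos hApos hlam hmu hscal
  have hjensen := sum_mul_log_le_log_sum_mul (s := (univ : Finset (ι × ι)))
    (w := fun p => B p.1 p.2 / Fintype.card ι) (x := fun p => lam p.1 * mu p.2)
    (fun p _ => by have := hB p.1 p.2; positivity)
    (by simp [Fintype.sum_prod_type, ← sum_div, hBrow, hN.ne'])
    (fun p _ => mul_pos (hlam p.1) (hmu p.2))
  have hweighted : ∑ i, ∑ j, B i j * log (lam i * mu j) = ∑ i, log (lam i) + ∑ j, log (mu j) := by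
    simp only [log_mul (hlam _).ne' (hmu _).ne', mul_add, sum_add_distrib, ← sum_mul, hBrow,
      one_mul]
    rw [sum_comm]
    simp only [← sum_mul, hBcol, one_mul]
  have hmean : ∑ i, ∑ j, B i j * (lam i * mu j) = ∑ i, ∑ j, A i j := by
    simp only [hscal, mul_assoc]
  simp only [Fintype.sum_prod_type, div_mul_eq_mul_div, ← sum_div, hweighted, hmean] at hjensen
  rw [one_div_mul_eq_div]
  rwa [div_le_iff₀' hN] at hjensen

end DiagonalScaling

theorem scaling_entry_bound_general (n : ℕ) (hn : 3 ≤ n)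
    (A B : Matrix (Fin n) (Fin n) ℝ) (lam mu : Fin n → ℝ)
    (hApos : ∀ i j, 0 < A i j)
    (hlam : ∀ i, 0 < lam i) (hmu : ∀ j, 0 < mu j)
    (hscal : ∀ i j, A i j = B i j * lam i * mu j)
    (hBrow : ∀ i, ∑ j, B i j = 1) (hBcol : ∀ j, ∑ i, B i j = 1) :
    ∀ k l, Real.log (B k l) ≤
      Real.log (A k l)
        - (1 / (n - 2 : ℝ)) * ∑ j ∈ univ.erase l, Real.log (A k j)
        - (1 / (n - 2 : ℝ)) * ∑ i ∈ univ.erase k, Real.log (A i l)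
        + ((n : ℝ) / (n - 2)) * Real.log ((1 / n) * ∑ i, ∑ j, A i j)
        - ((2 * n - 2 : ℝ) / (n - 2)) * Real.log (n - 1) := by
  intro k l
  have hB := DiagonalScaling.entry_pos hApos hlam hmu hscal
  have hrow := sum_erase_log_le_of_sum_eq_one (hB k) (hBrow k) l
  have hcol := sum_erase_log_le_of_sum_eq_one (hB · l) (hBcol l) k
  have htotal := DiagonalScaling.sum_log_add_sum_log_le hApos hlam hmu hscal hBrow hBcol
  have hcard (a : Fin n) : (#(univ.erase a) : ℝ) = n - 1 := by
    rw [card_erase_of_mem (mem_univ a), card_univ, Fintype.card_fin, Nat.cast_pred (by omega)]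
  simp only [Fintype.card_fin] at hrow hcol htotal
  rw [← add_sum_erase _ _ (mem_univ k), ← add_sum_erase _ _ (mem_univ l), one_div_mul_eq_div]
    at htotal
  rw [DiagonalScaling.log_eq hApos hlam hmu hscal, DiagonalScaling.sum_log_row hApos hlam hmu hscal,
    DiagonalScaling.sum_log_col hApos hlam hmu hscal, hcard, hcard]
  have hn2 : (0 : ℝ) < n - 2 := by
    have : (3 : ℝ) ≤ n := by exact_mod_cast hn
    linarith
  field_simp
  linarith

/-- Entrywise bound on the doubly stochastic scaling `B` of a positive matrix `A`:
for all `k, l`,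
`ln b_{kl} ≤ ln a_{kl} − (1/(n−2)) Σ_{j≠l} ln a_{kj} − (1/(n−2)) Σ_{i≠k} ln a_{il}`
`+ (n/(n−2)) ln((1/n) Σ_{i,j} a_{ij}) − ((2n−2)/(n−2)) ln(n−1)`. -/
theorem scaling_entry_bound (n : ℕ) (hn : 3 ≤ n)
    (A B : Matrix (Fin n) (Fin n) ℝ) (lam mu : Fin n → ℝ)
    (hApos : ∀ i j, 0 < A i j)
    (hlam : ∀ i, 0 < lam i) (hmu : ∀ j, 0 < mu j)
    (hscal : ∀ i j, A i j = B i j * lam i * mu j)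
    (hBnonneg : ∀ i j, 0 ≤ B i j)
    (hBrow : ∀ i, ∑ j, B i j = 1) (hBcol : ∀ j, ∑ i, B i j = 1) :
    ∀ k l, Real.log (B k l) ≤
      Real.log (A k l)
        - (1 / (n - 2 : ℝ)) * ∑ j ∈ univ.erase l, Real.log (A k j)
        - (1 / (n - 2 : ℝ)) * ∑ i ∈ univ.erase k, Real.log (A i l)
        + ((n : ℝ) / (n - 2)) * Real.log ((1 / n) * ∑ i, ∑ j, A i j)
        - ((2 * n - 2 : ℝ) / (n - 2)) * Real.log (n - 1) :=
  scaling_entry_bound_general n hn A B lam mu hApos hlam hmu hscal hBrow hBcol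
end

section
/- The function σ on positive n×n matrices defined by σ(X) = Πᵢ (λᵢ μᵢ), where X = (y_{ij} λᵢ μⱼ) is the doubly stochastic scaling decomposition of X, satisfies the variational formula n^n σ(X) = (min Σ_{i,j} x_{ij} ξᵢ ηⱼ)^n, where the minimum is over positive ξᵢ, ηⱼ with Πᵢ ξᵢ = Πⱼ ηⱼ = 1. In particular, σ is monotone: if x_{ij} ≤ y_{ij} for all i,j then σ(X) ≤ σ(Y). -/
/-!
Since `x_{ij} ξᵢ ηⱼ = y_{ij} (λᵢ ξᵢ) (μⱼ ηⱼ)`, weighted AM-GM with the weights `y_{ij} / n` bounds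
`Σ x_{ij} ξᵢ ηⱼ` below by `n (Πᵢ λᵢ ξᵢ μᵢ ηᵢ)^{1/n} = n σ(X)^{1/n}`: the row and column sums of `y`
are `1` and `Π ξ = Π η = 1`. Equality holds when all `λᵢ ξᵢ` and all `μⱼ ηⱼ` are constant.
Monotonicity follows because for fixed `ξ, η` the objective is monotone in `X`.
-/

open Finset Matrix

variable {ι : Type*} [Fintype ι]

def normalizedBilinearValues (X : Matrix ι ι ℝ) : Set ℝ :=
  {v | ∃ ξ η : ι → ℝ, (∀ i, 0 < ξ i) ∧ (∀ j, 0 < η j) ∧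
    (∏ i, ξ i) = 1 ∧ (∏ j, η j) = 1 ∧ v = ∑ i, ∑ j, X i j * ξ i * η j}

lemma prod_prod_rpow_of_sum_eq_one {c : ι → ℝ} (hc : ∀ i, 0 < c i) {w : ι → ι → ℝ}
    (hw : ∀ i, ∑ j, w i j = 1) (t : ℝ) :
    ∏ i, ∏ j, c i ^ (w i j * t) = (∏ i, c i) ^ t := by
  have hrow (i : ι) : ∏ j, c i ^ (w i j * t) = c i ^ t := by
    rw [← Real.rpow_sum_of_pos (hc i), ← sum_mul, hw i, one_mul]
  simp only [hrow, Real.finsetProd_rpow _ _ fun i _ => (hc i).le]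

lemma prod_rpow_inv_card_div_eq_one {a : ι → ℝ} (ha : ∀ i, 0 < a i) :
    ∏ i, (∏ j, a j) ^ (Fintype.card ι : ℝ)⁻¹ / a i = 1 := by
  have hprod : 0 < ∏ j, a j := prod_pos fun j _ => ha j
  rw [prod_div_distrib, prod_const, card_univ]
  rcases (Fintype.card ι).eq_zero_or_pos with hcard | hcard
  · simp [Fintype.card_eq_zero_iff.1 hcard]
  · rw [Real.rpow_inv_natCast_pow hprod.le hcard.ne', div_self hprod.ne']

lemma le_of_isLeast_normalizedBilinearValues {X X' : Matrix ι ι ℝ} {a a' : ℝ}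
    (ha : IsLeast (normalizedBilinearValues X) a) (ha' : IsLeast (normalizedBilinearValues X') a')
    (hle : ∀ i j, X i j ≤ X' i j) : a ≤ a' := by
  obtain ⟨ξ, η, hξ, hη, hξ1, hη1, rfl⟩ := ha'.1
  refine (ha.2 ⟨ξ, η, hξ, hη, hξ1, hη1, rfl⟩).trans (sum_le_sum fun i _ => sum_le_sum fun j _ => ?_)
  have := hξ i
  have := hη j
  gcongr
  exact hle i j

variable [DecidableEq ι]

theorem prod_rpow_inv_card_le_sum_mul_div_card [Nonempty ι] {Y : Matrix ι ι ℝ}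
    (hY : Y ∈ doublyStochastic ℝ ι) {c d : ι → ℝ} (hc : ∀ i, 0 < c i) (hd : ∀ j, 0 < d j) :
    (∏ i, c i * d i) ^ (Fintype.card ι : ℝ)⁻¹ ≤
      (∑ i, ∑ j, Y i j * c i * d j) / Fintype.card ι := by
  set t : ℝ := (Fintype.card ι : ℝ)⁻¹
  have hcard : (Fintype.card ι : ℝ) ≠ 0 := by positivity
  have hweights : ∑ p : ι × ι, Y p.1 p.2 * t = 1 := by
    simp only [Fintype.sum_prod_type, ← sum_mul, sum_row_of_mem_doublyStochastic hY, sum_const,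
      card_univ, nsmul_eq_mul, mul_one, t, mul_inv_cancel₀ hcard]
  have amgm := Real.geom_mean_le_arith_mean_weighted univ (fun p : ι × ι => Y p.1 p.2 * t)
    (fun p => c p.1 * d p.2)
    (fun p _ => mul_nonneg (nonneg_of_mem_doublyStochastic hY) (by positivity)) hweights
    (fun p _ => (mul_pos (hc p.1) (hd p.2)).le)
  have hcols := prod_prod_rpow_of_sum_eq_one hd (w := fun j i => Y i j)
    (sum_col_of_mem_doublyStochastic hY) t
  beta_reduce at hcols
  have hgeom : ∏ p : ι × ι, (c p.1 * d p.2) ^ (Y p.1 p.2 * t) = (∏ i, c i * d i) ^ t := by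
    simp only [Fintype.prod_prod_type, Real.mul_rpow (hc _).le (hd _).le, prod_mul_distrib]
    rw [prod_prod_rpow_of_sum_eq_one hc (sum_row_of_mem_doublyStochastic hY),
      prod_comm (s := univ), hcols,
      Real.mul_rpow (prod_nonneg fun i _ => (hc i).le) (prod_nonneg fun j _ => (hd j).le)]
  have harith : ∑ p : ι × ι, Y p.1 p.2 * t * (c p.1 * d p.2) =
      (∑ i, ∑ j, Y i j * c i * d j) / Fintype.card ι := by
    simp only [Fintype.sum_prod_type, sum_div, t]
    exact sum_congr rfl fun i _ => sum_congr rfl fun j _ => by field_simp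
  rwa [hgeom, harith] at amgm

theorem isLeast_normalizedBilinearValues [Nonempty ι] {X Y : Matrix ι ι ℝ} {lam mu : ι → ℝ}
    (hY : Y ∈ doublyStochastic ℝ ι) (hlam : ∀ i, 0 < lam i) (hmu : ∀ j, 0 < mu j)
    (hscal : ∀ i j, X i j = Y i j * lam i * mu j) :
    IsLeast (normalizedBilinearValues X)
      (Fintype.card ι * (∏ i, lam i * mu i) ^ (Fintype.card ι : ℝ)⁻¹) := by
  have hcard : (0 : ℝ) < Fintype.card ι := by positivity
  constructor
  · -- the AM-GM equality case: every `λᵢ ξᵢ` equals `g` and every `μⱼ ηⱼ` equals `h`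
    set g := (∏ i, lam i) ^ (Fintype.card ι : ℝ)⁻¹
    set h := (∏ j, mu j) ^ (Fintype.card ι : ℝ)⁻¹
    have hg : 0 < g := Real.rpow_pos_of_pos (prod_pos fun i _ => hlam i) _
    have hh : 0 < h := Real.rpow_pos_of_pos (prod_pos fun j _ => hmu j) _
    refine ⟨fun i => g / lam i, fun j => h / mu j, fun i => div_pos hg (hlam i),
      fun j => div_pos hh (hmu j), prod_rpow_inv_card_div_eq_one hlam,
      prod_rpow_inv_card_div_eq_one hmu, ?_⟩
    have hterm (i j : ι) : X i j * (g / lam i) * (h / mu j) = Y i j * (g * h) := by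
      rw [hscal]
      field_simp [(hlam i).ne', (hmu j).ne']
    simp only [hterm, ← sum_mul, sum_row_of_mem_doublyStochastic hY, sum_const, card_univ,
      nsmul_eq_mul, mul_one]
    rw [prod_mul_distrib, Real.mul_rpow (prod_nonneg fun i _ => (hlam i).le)
      (prod_nonneg fun j _ => (hmu j).le)]
  · rintro v ⟨ξ, η, hξ, hη, hξ1, hη1, rfl⟩
    have hprod : ∏ i, lam i * ξ i * (mu i * η i) = ∏ i, lam i * mu i := by
      simp only [mul_mul_mul_comm, prod_mul_distrib, hξ1, hη1, mul_one]
    have hsum : ∑ i, ∑ j, Y i j * (lam i * ξ i) * (mu j * η j) =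
        ∑ i, ∑ j, X i j * ξ i * η j := by
      simp only [hscal]
      exact sum_congr rfl fun i _ => sum_congr rfl fun j _ => by ring
    have amgm := prod_rpow_inv_card_le_sum_mul_div_card hY (fun i => mul_pos (hlam i) (hξ i))
      (fun j => mul_pos (hmu j) (hη j))
    rwa [hprod, hsum, le_div_iff₀ hcard, mul_comm] at amgm

theorem sigma_variational_and_monotone_general (n : ℕ) (hn : 0 < n)
    (X Y : Matrix (Fin n) (Fin n) ℝ) (lam mu : Fin n → ℝ)
    (hlam : ∀ i, 0 < lam i) (hmu : ∀ j, 0 < mu j)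
    (hscal : ∀ i j, X i j = Y i j * lam i * mu j)
    (hYnonneg : ∀ i j, 0 ≤ Y i j)
    (hYrow : ∀ i, ∑ j, Y i j = 1) (hYcol : ∀ j, ∑ i, Y i j = 1) :
    (∃ m : ℝ, IsLeast {v : ℝ | ∃ ξ η : Fin n → ℝ, (∀ i, 0 < ξ i) ∧ (∀ j, 0 < η j) ∧
        (∏ i, ξ i) = 1 ∧ (∏ j, η j) = 1 ∧ v = ∑ i, ∑ j, X i j * ξ i * η j} m ∧
      (n : ℝ) ^ n * ∏ i, lam i * mu i = m ^ n) ∧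
    (∀ (X' Y' : Matrix (Fin n) (Fin n) ℝ) (lam' mu' : Fin n → ℝ),
      (∀ i j, 0 < X' i j) →
      (∀ i, 0 < lam' i) → (∀ j, 0 < mu' j) →
      (∀ i j, X' i j = Y' i j * lam' i * mu' j) →
      (∀ i j, 0 ≤ Y' i j) →
      (∀ i, ∑ j, Y' i j = 1) → (∀ j, ∑ i, Y' i j = 1) →
      (∀ i j, X i j ≤ X' i j) →
      ∏ i, lam i * mu i ≤ ∏ i, lam' i * mu' i) := by
  have : Nonempty (Fin n) := ⟨⟨0, hn⟩⟩
  have hσ : 0 ≤ ∏ i, lam i * mu i := prod_nonneg fun i _ => (mul_pos (hlam i) (hmu i)).le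
  have hmin := isLeast_normalizedBilinearValues
    (mem_doublyStochastic_iff_sum.2 ⟨hYnonneg, hYrow, hYcol⟩) hlam hmu hscal
  rw [Fintype.card_fin] at hmin
  refine ⟨⟨_, hmin, by rw [mul_pow, Real.rpow_inv_natCast_pow hσ hn.ne']⟩, ?_⟩
  intro X' Y' lam' mu' _ hlam' hmu' hscal' hY'nonneg hY'row hY'col hle
  have hmin' := isLeast_normalizedBilinearValues
    (mem_doublyStochastic_iff_sum.2 ⟨hY'nonneg, hY'row, hY'col⟩) hlam' hmu' hscal'
  rw [Fintype.card_fin] at hmin'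
  have hσ' : 0 ≤ ∏ i, lam' i * mu' i :=
    prod_nonneg fun i _ => (mul_pos (hlam' i) (hmu' i)).le
  have hroot := le_of_mul_le_mul_left (le_of_isLeast_normalizedBilinearValues hmin hmin' hle)
    (Nat.cast_pos.2 hn)
  exact (Real.rpow_le_rpow_iff hσ hσ' (by positivity)).1 hroot

/-- For a positive `n × n` matrix `X` with doubly stochastic scaling decomposition
`x_{ij} = y_{ij} λᵢ μⱼ`, the quantity `σ(X) = Πᵢ λᵢ μᵢ` satisfies the variational
formula `n^n σ(X) = (min Σ_{i,j} x_{ij} ξᵢ ηⱼ)^n`, the minimum taken over positive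
`ξ, η` with `Π ξᵢ = Π ηⱼ = 1`.  In particular `σ` is entrywise monotone. -/
theorem sigma_variational_and_monotone (n : ℕ) (hn : 0 < n)
    (X Y : Matrix (Fin n) (Fin n) ℝ) (lam mu : Fin n → ℝ)
    (hXpos : ∀ i j, 0 < X i j)
    (hlam : ∀ i, 0 < lam i) (hmu : ∀ j, 0 < mu j)
    (hscal : ∀ i j, X i j = Y i j * lam i * mu j)
    (hYnonneg : ∀ i j, 0 ≤ Y i j)
    (hYrow : ∀ i, ∑ j, Y i j = 1) (hYcol : ∀ j, ∑ i, Y i j = 1) :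
    (∃ m : ℝ, IsLeast {v : ℝ | ∃ ξ η : Fin n → ℝ, (∀ i, 0 < ξ i) ∧ (∀ j, 0 < η j) ∧
        (∏ i, ξ i) = 1 ∧ (∏ j, η j) = 1 ∧ v = ∑ i, ∑ j, X i j * ξ i * η j} m ∧
      (n : ℝ) ^ n * ∏ i, lam i * mu i = m ^ n) ∧
    (∀ (X' Y' : Matrix (Fin n) (Fin n) ℝ) (lam' mu' : Fin n → ℝ),
      (∀ i j, 0 < X' i j) →
      (∀ i, 0 < lam' i) → (∀ j, 0 < mu' j) →
      (∀ i j, X' i j = Y' i j * lam' i * mu' j) →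
      (∀ i j, 0 ≤ Y' i j) →
      (∀ i, ∑ j, Y' i j = 1) → (∀ j, ∑ i, Y' i j = 1) →
      (∀ i j, X i j ≤ X' i j) →
      ∏ i, lam i * mu i ≤ ∏ i, lam' i * mu' i) :=
  sigma_variational_and_monotone_general n hn X Y lam mu hlam hmu hscal hYnonneg hYrow hYcol
end

section
/- The function σ(X) on the open simplex Δ of positive n×n matrices with entry sum 1 attains its maximum value n^{−n} at the constant matrix with all entries 1/n². -/
/-! Weighted AM-GM with the weights `yᵢⱼ / n` bounds the weighted geometric mean of the
`λᵢμⱼ` by `(1/n) ∑ yᵢⱼλᵢμⱼ = (1/n) ∑ xᵢⱼ = 1/n`; because `Y` is doubly stochastic, that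
geometric mean is `(∏ λᵢμᵢ)^(1/n)`. At the constant matrix, with `c = 1/n²`, we have
`yᵢⱼ = c / (λᵢμⱼ)`, so the row and column sums force `λᵢ = c ∑ⱼ μⱼ⁻¹` and `μⱼ = c ∑ᵢ λᵢ⁻¹`,
while the total sum gives `c ∑ λᵢ⁻¹ ∑ μⱼ⁻¹ = n`; hence `λᵢμᵢ = c n = 1/n` for every `i`. -/

open Finset

section DoublyStochastic

variable {ι : Type*} [Fintype ι] [DecidableEq ι] {Y : Matrix ι ι ℝ} {lam mu : ι → ℝ}

lemma prod_mul_rpow_eq_of_mem_doublyStochastic (hY : Y ∈ doublyStochastic ℝ ι)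
    (hlam : ∀ i, 0 ≤ lam i) (hmu : ∀ j, 0 ≤ mu j) {c : ℝ} (hc : 0 ≤ c) :
    ∏ p : ι × ι, (lam p.1 * mu p.2) ^ (Y p.1 p.2 * c) = (∏ i, lam i * mu i) ^ c := by
  obtain ⟨hY0, hrow, hcol⟩ := mem_doublyStochastic_iff_sum.1 hY
  have hexp : ∀ i j, 0 ≤ Y i j * c := fun i j => mul_nonneg (hY0 i j) hc
  have hrow_prod : ∀ i, ∏ j, lam i ^ (Y i j * c) = lam i ^ c := fun i => by
    rw [← Real.rpow_sum_of_nonneg (hlam i) fun j _ => hexp i j, ← sum_mul, hrow, one_mul]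
  have hcol_prod : ∀ j, ∏ i, mu j ^ (Y i j * c) = mu j ^ c := fun j => by
    rw [← Real.rpow_sum_of_nonneg (hmu j) fun i _ => hexp i j, ← sum_mul, hcol, one_mul]
  calc ∏ p : ι × ι, (lam p.1 * mu p.2) ^ (Y p.1 p.2 * c)
      = (∏ i, ∏ j, lam i ^ (Y i j * c)) * ∏ j, ∏ i, mu j ^ (Y i j * c) := by
        simp_rw [Fintype.prod_prod_type, Real.mul_rpow (hlam _) (hmu _), prod_mul_distrib]
        rw [prod_comm (f := fun i j => mu j ^ (Y i j * c))]
    _ = (∏ i, lam i ^ c) * ∏ j, mu j ^ c := by simp_rw [hrow_prod, hcol_prod]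
    _ = (∏ i, lam i * mu i) ^ c := by
        rw [prod_mul_distrib,
          Real.mul_rpow (prod_nonneg fun i _ => hlam i) (prod_nonneg fun i _ => hmu i),
          Real.finsetProd_rpow _ _ fun i _ => hlam i, Real.finsetProd_rpow _ _ fun i _ => hmu i]

lemma prod_mul_le_of_mem_doublyStochastic [Nonempty ι] (hY : Y ∈ doublyStochastic ℝ ι)
    (hlam : ∀ i, 0 ≤ lam i) (hmu : ∀ j, 0 ≤ mu j) :
    ∏ i, lam i * mu i ≤
      ((∑ i, ∑ j, Y i j * lam i * mu j) / Fintype.card ι) ^ Fintype.card ι := by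
  set n := Fintype.card ι
  have hn : (0 : ℝ) < n := Nat.cast_pos.2 Fintype.card_pos
  obtain ⟨hY0, hrow, -⟩ := mem_doublyStochastic_iff_sum.1 hY
  have hw : ∑ p : ι × ι, Y p.1 p.2 * (n : ℝ)⁻¹ = 1 := by
    simp_rw [Fintype.sum_prod_type, ← sum_mul, hrow, sum_const, card_univ, nsmul_one]
    exact mul_inv_cancel₀ hn.ne'
  have hamgm := Real.geom_mean_le_arith_mean_weighted univ
    (fun p : ι × ι => Y p.1 p.2 * (n : ℝ)⁻¹) (fun p : ι × ι => lam p.1 * mu p.2)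
    (fun p _ => mul_nonneg (hY0 _ _) (inv_nonneg.2 hn.le)) hw
    (fun p _ => mul_nonneg (hlam _) (hmu _))
  rw [prod_mul_rpow_eq_of_mem_doublyStochastic hY hlam hmu (inv_nonneg.2 hn.le)] at hamgm
  have hsum : ∑ p : ι × ι, Y p.1 p.2 * (n : ℝ)⁻¹ * (lam p.1 * mu p.2) =
      (∑ i, ∑ j, Y i j * lam i * mu j) / n := by
    simp_rw [Fintype.sum_prod_type, sum_div]
    exact sum_congr rfl fun i _ => sum_congr rfl fun j _ => by ring
  rw [hsum] at hamgm
  have hP : 0 ≤ ∏ i, lam i * mu i := prod_nonneg fun i _ => mul_nonneg (hlam i) (hmu i)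
  calc ∏ i, lam i * mu i = ((∏ i, lam i * mu i) ^ (n⁻¹ : ℝ)) ^ n :=
        (Real.rpow_inv_natCast_pow hP Fintype.card_ne_zero).symm
    _ ≤ _ := pow_le_pow_left₀ (Real.rpow_nonneg hP _) hamgm n

lemma mul_eq_of_mem_doublyStochastic_of_forall_eq (hY : Y ∈ doublyStochastic ℝ ι)
    (hlam : ∀ i, 0 < lam i) (hmu : ∀ j, 0 < mu j) {c : ℝ}
    (hc : ∀ i j, Y i j * lam i * mu j = c) (i : ι) :
    lam i * mu i = c * Fintype.card ι := by
  obtain ⟨-, hrow, hcol⟩ := mem_doublyStochastic_iff_sum.1 hY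
  have hYc : ∀ i j, Y i j = c * (lam i)⁻¹ * (mu j)⁻¹ := fun i j => by
    rw [← hc]; field_simp [(hlam i).ne', (hmu j).ne']
  have hlam_eq : ∀ i, lam i = c * ∑ j, (mu j)⁻¹ := fun i => by
    have h := hrow i
    simp_rw [hYc, mul_assoc, ← mul_sum] at h
    rwa [mul_left_comm, inv_mul_eq_one₀ (hlam i).ne'] at h
  have hmu_eq : ∀ j, mu j = c * ∑ i, (lam i)⁻¹ := fun j => by
    have h := hcol j
    simp_rw [hYc, ← sum_mul, ← mul_sum] at h
    rwa [mul_inv_eq_one₀ (hmu j).ne', eq_comm] at h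
  have htotal : c * (∑ i, (lam i)⁻¹) * ∑ j, (mu j)⁻¹ = Fintype.card ι := by
    have : ∑ i, ∑ j, Y i j = Fintype.card ι := by simp [hrow]
    simpa only [hYc, ← mul_sum, ← sum_mul] using this
  rw [hlam_eq, hmu_eq, ← htotal]
  ring

end DoublyStochastic

theorem sigma_max_on_simplex_general (n : ℕ) :
    (∀ (X Y : Matrix (Fin n) (Fin n) ℝ) (lam mu : Fin n → ℝ),
      (∀ i j, 0 < X i j) → (∑ i, ∑ j, X i j = 1) →
      (∀ i, 0 < lam i) → (∀ j, 0 < mu j) →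
      (∀ i j, X i j = Y i j * lam i * mu j) →
      (∀ i j, 0 ≤ Y i j) →
      (∀ i, ∑ j, Y i j = 1) → (∀ j, ∑ i, Y i j = 1) →
      ∏ i, lam i * mu i ≤ ((n : ℝ) ^ n)⁻¹) ∧
    (∀ (Y : Matrix (Fin n) (Fin n) ℝ) (lam mu : Fin n → ℝ),
      (∀ i, 0 < lam i) → (∀ j, 0 < mu j) →
      (∀ i j, (1 / (n : ℝ) ^ 2) = Y i j * lam i * mu j) →
      (∀ i j, 0 ≤ Y i j) →
      (∀ i, ∑ j, Y i j = 1) → (∀ j, ∑ i, Y i j = 1) →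
      ∏ i, lam i * mu i = ((n : ℝ) ^ n)⁻¹) := by
  constructor
  · intro X Y lam mu _ hXsum hlam hmu hdec hY hrow hcol
    have : Nonempty (Fin n) := by
      by_contra h
      rw [not_nonempty_iff] at h
      simp at hXsum
    calc ∏ i, lam i * mu i
        ≤ ((∑ i, ∑ j, Y i j * lam i * mu j) / n) ^ n := by
          simpa using prod_mul_le_of_mem_doublyStochastic
            (mem_doublyStochastic_iff_sum.2 ⟨hY, hrow, hcol⟩) (fun i => (hlam i).le)
            (fun j => (hmu j).le)
      _ = ((n : ℝ) ^ n)⁻¹ := by simp_rw [← hdec, hXsum, one_div, inv_pow]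
  · intro Y lam mu hlam hmu hdec hY hrow hcol
    have hmul := mul_eq_of_mem_doublyStochastic_of_forall_eq
      (mem_doublyStochastic_iff_sum.2 ⟨hY, hrow, hcol⟩) hlam hmu fun i j => (hdec i j).symm
    rw [prod_congr rfl fun i _ => hmul i, prod_const, card_univ, Fintype.card_fin]
    have : 1 / (n : ℝ) ^ 2 * n = (n : ℝ)⁻¹ := by
      rcases eq_or_ne (n : ℝ) 0 with h | h
      · simp [h]
      · field_simp
    rw [this, inv_pow]

/-- On the open simplex `Δ` of positive `n × n` matrices with entry sum 1, the
function `σ(X) = Πᵢ λᵢμᵢ` (from the doubly stochastic scaling decomposition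
`x_{ij} = y_{ij} λᵢ μⱼ`) attains its maximum value `n^{-n}` at the constant
matrix with all entries `1/n²`. -/
theorem sigma_max_on_simplex (n : ℕ) (hn : 0 < n) :
    (∀ (X Y : Matrix (Fin n) (Fin n) ℝ) (lam mu : Fin n → ℝ),
      (∀ i j, 0 < X i j) → (∑ i, ∑ j, X i j = 1) →
      (∀ i, 0 < lam i) → (∀ j, 0 < mu j) →
      (∀ i j, X i j = Y i j * lam i * mu j) →
      (∀ i j, 0 ≤ Y i j) →
      (∀ i, ∑ j, Y i j = 1) → (∀ j, ∑ i, Y i j = 1) →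
      ∏ i, lam i * mu i ≤ ((n : ℝ) ^ n)⁻¹) ∧
    (∀ (Y : Matrix (Fin n) (Fin n) ℝ) (lam mu : Fin n → ℝ),
      (∀ i, 0 < lam i) → (∀ j, 0 < mu j) →
      (∀ i j, (1 / (n : ℝ) ^ 2) = Y i j * lam i * mu j) →
      (∀ i j, 0 ≤ Y i j) →
      (∀ i, ∑ j, Y i j = 1) → (∀ j, ∑ i, Y i j = 1) →
      ∏ i, lam i * mu i = ((n : ℝ) ^ n)⁻¹) :=
  sigma_max_on_simplex_general n
end

section
/- Let f be a non-negative function on positive n×n matrices that is positively homogeneous of degree N (f(λX) = λ^N f(X) for λ > 0) and monotone (entrywise X ≤ Y implies f(X) ≤ f(Y)). Let Δ be the simplex of positive matrices with entry sum 1 and, for 0 < δ < 1/n², let Δ^δ ⊂ Δ be the subset where all entries exceed δ. Then ∫_{Δ^δ} f dμ ≤ ∫_Δ f dμ ≤ (1 − δn²)^{−N−n²+1} ∫_{Δ^δ} f dμ, where μ is the normalized Lebesgue measure on Δ. -/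
/-!
The affine map `T X = δ + c X` with `c = 1 - δ n²` carries `Δ` onto `Δ^δ`. It multiplies the
`(n² - 1)`-dimensional Hausdorff measure by `c^(n² - 1)`, and by homogeneity and monotonicity
`c^N f X = f (c X) ≤ f (T X)`. Changing variables along `T` gives the upper bound; the lower
bound is `Δ^δ ⊆ Δ`.
-/

open Finset MeasureTheory

section Homothety

variable {E : Type*} [NormedAddCommGroup E] [NormedSpace ℝ E] [MeasurableSpace E] [BorelSpace E]
  {d : ℝ} {c : ℝ}

open Pointwise in
theorem map_add_smul_hausdorffMeasure (hd : 0 ≤ d) (hc : c ≠ 0) (v : E) :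
    Measure.map (fun x => v + c • x) μH[d] = ENNReal.ofReal (|c| ^ (-d)) • μH[d] := by
  ext s hs
  have hpre : (fun x : E => v + c • x) ⁻¹' s = c⁻¹ • ((v + ·) ⁻¹' s) := by
    rw [← Set.preimage_smul₀ hc]
    rfl
  rw [Measure.map_apply ((measurable_const_smul c).const_add v) hs, hpre,
    Measure.hausdorffMeasure_smul₀ hd (inv_ne_zero hc), measure_preimage_add,
    Measure.smul_apply, Real.rpow_neg (abs_nonneg c), ← Real.inv_rpow (abs_nonneg c)]
  simp only [ENNReal.smul_def, smul_eq_mul, nnnorm_inv]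
  rw [← ENNReal.ofReal_coe_nnreal, NNReal.coe_rpow, NNReal.coe_inv, coe_nnnorm, Real.norm_eq_abs]

theorem setLIntegral_comp_add_smul (hd : 0 ≤ d) (hc : c ≠ 0) (v : E) (g : E → ENNReal)
    (s : Set E) :
    ∫⁻ x in s, g (v + c • x) ∂μH[d] =
      ENNReal.ofReal (|c| ^ (-d)) * ∫⁻ y in (fun x => v + c • x) '' s, g y ∂μH[d] := by
  have hT : MeasurableEmbedding (fun x : E => v + c • x) :=
    ((Homeomorph.smulOfNeZero c hc).trans (Homeomorph.addLeft v)).measurableEmbedding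
  conv_lhs => rw [← hT.lintegral_map, ← Set.preimage_image_eq s hT.injective, ← hT.restrict_map]
  rw [map_add_smul_hausdorffMeasure hd hc, Measure.restrict_smul, lintegral_smul_measure,
    smul_eq_mul]

end Homothety

section Simplex

variable {ι κ : Type*} [Fintype ι] [Fintype κ]

/-- `simplexAbove 0` is the simplex `Δ` and `simplexAbove δ` is `Δ^δ`. -/
def simplexAbove (δ : ℝ) : Set (ι → κ → ℝ) :=
  {X | (∀ i j, δ < X i j) ∧ ∑ i, ∑ j, X i j = 1}

theorem simplexAbove_antitone : Antitone (simplexAbove (ι := ι) (κ := κ)) :=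
  fun _ _ hδ _ hX => ⟨fun i j => hδ.trans_lt (hX.1 i j), hX.2⟩

theorem sum_sum_const_add_smul (δ c : ℝ) (X : ι → κ → ℝ) :
    ∑ i, ∑ j, ((fun _ _ => δ : ι → κ → ℝ) + c • X) i j =
      δ * (Fintype.card ι * Fintype.card κ) + c * ∑ i, ∑ j, X i j := by
  simp only [Pi.add_apply, Pi.smul_apply, smul_eq_mul, Finset.sum_add_distrib, Finset.mul_sum,
    Finset.sum_const, Finset.card_univ, nsmul_eq_mul]
  ring

theorem image_simplexAbove_zero {δ c : ℝ} (hc : 0 < c)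
    (hδc : c + δ * (Fintype.card ι * Fintype.card κ) = 1) :
    (fun X => (fun _ _ => δ : ι → κ → ℝ) + c • X) '' simplexAbove 0 = simplexAbove δ := by
  ext Y
  constructor
  · rintro ⟨X, ⟨hXpos, hXsum⟩, rfl⟩
    refine ⟨fun i j => ?_, ?_⟩
    · simpa using mul_pos hc (hXpos i j)
    · rw [sum_sum_const_add_smul, hXsum]
      linarith
  · rintro ⟨hYgt, hYsum⟩
    have hY : (fun _ _ => δ) + c • (c⁻¹ • (Y - fun _ _ => δ)) = Y := by
      rw [smul_inv_smul₀ hc.ne', add_sub_cancel]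
    refine ⟨c⁻¹ • (Y - fun _ _ => δ), ⟨fun i j => ?_, ?_⟩, hY⟩
    · have := hYgt i j
      simp only [Pi.smul_apply, Pi.sub_apply, smul_eq_mul]
      exact mul_pos (inv_pos.2 hc) (by linarith)
    · have hsum := sum_sum_const_add_smul (ι := ι) (κ := κ) δ c (c⁻¹ • (Y - fun _ _ => δ))
      rw [hY, hYsum] at hsum
      nlinarith

end Simplex

theorem ofReal_le_zpow_neg_mul_of_monotone_of_homogeneous {E : Type*} [AddCommMonoid E]
    [PartialOrder E] [IsOrderedAddMonoid E] [Module ℝ E] {f : E → ℝ} (hf : Monotone f) {N : ℕ}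
    {c : ℝ} (hc : 0 < c) (hhom : ∀ x, f (c • x) = c ^ N * f x) {v : E} (hv : 0 ≤ v) (x : E) :
    ENNReal.ofReal (f x) ≤ ENNReal.ofReal (c ^ (-(N : ℤ))) * ENNReal.ofReal (f (v + c • x)) := by
  have h : c ^ N * f x ≤ f (v + c • x) := hhom x ▸ hf (le_add_of_nonneg_left hv)
  rw [← ENNReal.ofReal_mul (zpow_nonneg hc.le _), zpow_neg, zpow_natCast, inv_mul_eq_div]
  exact ENNReal.ofReal_le_ofReal ((le_div_iff₀' (pow_pos hc N)).2 h)

theorem ofReal_zpow_mul_ofReal_rpow_intCast {c : ℝ} (hc : 0 < c) (a b : ℤ) :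
    ENNReal.ofReal (c ^ a) * ENNReal.ofReal (c ^ (b : ℝ)) = ENNReal.ofReal (c ^ (a + b)) := by
  rw [← ENNReal.ofReal_mul (zpow_nonneg hc.le _), Real.rpow_intCast, zpow_add₀ hc.ne']

theorem integral_delta_interior_bounds_general (n N : ℕ)
    (f : (Fin n → Fin n → ℝ) → ℝ)
    (hhom : ∀ (X : Fin n → Fin n → ℝ) (c : ℝ), 0 < c →
      f (fun i j => c * X i j) = c ^ N * f X)
    (hmono : ∀ X Y : Fin n → Fin n → ℝ, (∀ i j, X i j ≤ Y i j) → f X ≤ f Y)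
    (δ : ℝ) (hδ : 0 < δ) (hδn : δ < 1 / (n : ℝ) ^ 2) :
    (∫⁻ X in {X : Fin n → Fin n → ℝ |
          (∀ i j, δ < X i j) ∧ ∑ i, ∑ j, X i j = 1},
        ENNReal.ofReal (f X) ∂(μH[((n : ℝ) ^ 2 - 1)]) ≤
      ∫⁻ X in {X : Fin n → Fin n → ℝ |
          (∀ i j, 0 < X i j) ∧ ∑ i, ∑ j, X i j = 1},
        ENNReal.ofReal (f X) ∂(μH[((n : ℝ) ^ 2 - 1)])) ∧
    (∫⁻ X in {X : Fin n → Fin n → ℝ |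
          (∀ i j, 0 < X i j) ∧ ∑ i, ∑ j, X i j = 1},
        ENNReal.ofReal (f X) ∂(μH[((n : ℝ) ^ 2 - 1)]) ≤
      ENNReal.ofReal ((1 - δ * n ^ 2) ^ (-(N : ℤ) - n ^ 2 + 1)) *
      ∫⁻ X in {X : Fin n → Fin n → ℝ |
          (∀ i j, δ < X i j) ∧ ∑ i, ∑ j, X i j = 1},
        ENNReal.ofReal (f X) ∂(μH[((n : ℝ) ^ 2 - 1)])) := by
  refine ⟨lintegral_mono_set (simplexAbove_antitone hδ.le), ?_⟩
  have hn : (1 : ℝ) ≤ n := by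
    rcases Nat.eq_zero_or_pos n with rfl | hn
    · norm_num at hδn; linarith
    · exact_mod_cast hn
  set c : ℝ := 1 - δ * n ^ 2
  have hc : 0 < c := by
    have := (lt_div_iff₀ (by positivity)).1 hδn
    linarith
  have hδc : c + δ * (Fintype.card (Fin n) * Fintype.card (Fin n)) = 1 := by
    simp only [c, Fintype.card_fin]
    ring
  have hdim : -((n : ℝ) ^ 2 - 1) = ((1 - (n : ℤ) ^ 2 : ℤ) : ℝ) := by
    push_cast
    ring
  have hpoint := ofReal_le_zpow_neg_mul_of_monotone_of_homogeneous (fun X Y h => hmono X Y h) hc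
    (fun X => hhom X c hc) (v := fun _ _ => δ) (fun _ _ => hδ.le)
  calc ∫⁻ X in simplexAbove 0, ENNReal.ofReal (f X) ∂μH[(n : ℝ) ^ 2 - 1]
      ≤ ∫⁻ X in simplexAbove 0, ENNReal.ofReal (c ^ (-(N : ℤ))) *
          ENNReal.ofReal (f ((fun _ _ => δ) + c • X)) ∂μH[(n : ℝ) ^ 2 - 1] :=
        lintegral_mono hpoint
    _ = ENNReal.ofReal (c ^ (-(N : ℤ))) * (ENNReal.ofReal (|c| ^ (-((n : ℝ) ^ 2 - 1))) *
          ∫⁻ X in simplexAbove δ, ENNReal.ofReal (f X) ∂μH[(n : ℝ) ^ 2 - 1]) := by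
        rw [lintegral_const_mul' _ _ ENNReal.ofReal_ne_top,
          setLIntegral_comp_add_smul (by nlinarith) hc.ne' _ (fun X => ENNReal.ofReal (f X)),
          image_simplexAbove_zero hc hδc]
    _ = _ := by
        rw [← mul_assoc, abs_of_pos hc, hdim, ofReal_zpow_mul_ofReal_rpow_intCast hc]
        congr 3
        ring

/-- Let `f` be a non-negative function on positive `n × n` matrices, positively
homogeneous of degree `N` and entrywise monotone.  Then, with `μ` the
(normalized) Lebesgue measure on the simplex `Δ` of positive matrices with entry
sum 1 (here the `(n²−1)`-dimensional Hausdorff measure, which is proportional to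
it, so the inequalities are equivalent), and `Δ^δ` the subset where all entries
exceed `δ` (for `0 < δ < 1/n²`):
`∫_{Δ^δ} f dμ ≤ ∫_Δ f dμ ≤ (1 − δn²)^{−N−n²+1} ∫_{Δ^δ} f dμ`. -/
theorem integral_delta_interior_bounds (n N : ℕ) (hn : 0 < n)
    (f : (Fin n → Fin n → ℝ) → ℝ)
    (hf0 : ∀ X, 0 ≤ f X)
    (hhom : ∀ (X : Fin n → Fin n → ℝ) (c : ℝ), 0 < c →
      f (fun i j => c * X i j) = c ^ N * f X)
    (hmono : ∀ X Y : Fin n → Fin n → ℝ, (∀ i j, X i j ≤ Y i j) → f X ≤ f Y)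
    (δ : ℝ) (hδ : 0 < δ) (hδn : δ < 1 / (n : ℝ) ^ 2) :
    (∫⁻ X in {X : Fin n → Fin n → ℝ |
          (∀ i j, δ < X i j) ∧ ∑ i, ∑ j, X i j = 1},
        ENNReal.ofReal (f X) ∂(μH[((n : ℝ) ^ 2 - 1)]) ≤
      ∫⁻ X in {X : Fin n → Fin n → ℝ |
          (∀ i j, 0 < X i j) ∧ ∑ i, ∑ j, X i j = 1},
        ENNReal.ofReal (f X) ∂(μH[((n : ℝ) ^ 2 - 1)])) ∧
    (∫⁻ X in {X : Fin n → Fin n → ℝ |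
          (∀ i j, 0 < X i j) ∧ ∑ i, ∑ j, X i j = 1},
        ENNReal.ofReal (f X) ∂(μH[((n : ℝ) ^ 2 - 1)]) ≤
      ENNReal.ofReal ((1 - δ * n ^ 2) ^ (-(N : ℤ) - n ^ 2 + 1)) *
      ∫⁻ X in {X : Fin n → Fin n → ℝ |
          (∀ i j, δ < X i j) ∧ ∑ i, ∑ j, X i j = 1},
        ENNReal.ofReal (f X) ∂(μH[((n : ℝ) ^ 2 - 1)])) :=
  integral_delta_interior_bounds_general n N f hhom hmono δ hδ hδn
end

section
/- Let X be an n×n positive matrix with doubly stochastic scaling Y, and let J_t be the t×t matrix with all entries 1/t. Then Y ⊗ J_t is the doubly stochastic scaling of X ⊗ J_t, and σ(X ⊗ J_t) = σ(X)^t, where σ(A) = Πᵢ λᵢμᵢ for the scaling decomposition a_{ij} = b_{ij}λᵢμⱼ. Consequently per(X ⊗ J_t) = per(Y ⊗ J_t)·σ(X)^t. -/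
open Finset

/-- The permanent of a square matrix indexed by a finite type. -/
def perm {ι : Type*} [Fintype ι] [DecidableEq ι] (M : Matrix ι ι ℝ) : ℝ :=
  ∑ σ : Equiv.Perm ι, ∏ i, M i (σ i)

/-- `X ⊗ J_t`: the `nt × nt` block matrix whose `(i,j)`-th `t × t` block has all
entries `x_{ij}/t`. -/
noncomputable def tensorJ {n : ℕ} (t : ℕ) (X : Matrix (Fin n) (Fin n) ℝ) :
    Matrix (Fin n × Fin t) (Fin n × Fin t) ℝ :=
  fun p q => X p.1 q.1 / t

private lemma prod_fst_pow {n t : ℕ} (f : Fin n → ℝ) :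
    ∏ p : Fin n × Fin t, f p.1 = (∏ i, f i) ^ t := by
  rw [Fintype.prod_prod_type]
  simp [prod_pow]

/-- If `Y` is the doubly stochastic scaling of the positive matrix `X` (with
factors `λ, μ`), then `Y ⊗ J_t` is the doubly stochastic scaling of `X ⊗ J_t`
(with factors `λ_{(i,a)} = λᵢ`, `μ_{(j,b)} = μⱼ`, whose product is
`(Πᵢ λᵢμᵢ)^t`, i.e. `σ(X ⊗ J_t) = σ(X)^t`), and consequently
`per (X ⊗ J_t) = per (Y ⊗ J_t) · σ(X)^t`. -/
theorem scaling_tensorJ (n t : ℕ) (hn : 0 < n) (ht : 0 < t)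
    (X Y : Matrix (Fin n) (Fin n) ℝ) (lam mu : Fin n → ℝ)
    (hXpos : ∀ i j, 0 < X i j)
    (hlam : ∀ i, 0 < lam i) (hmu : ∀ j, 0 < mu j)
    (hscal : ∀ i j, X i j = Y i j * lam i * mu j)
    (hYnonneg : ∀ i j, 0 ≤ Y i j)
    (hYrow : ∀ i, ∑ j, Y i j = 1) (hYcol : ∀ j, ∑ i, Y i j = 1) :
    ((∀ p q, 0 ≤ tensorJ t Y p q) ∧
      (∀ p, ∑ q, tensorJ t Y p q = 1) ∧ (∀ q, ∑ p, tensorJ t Y p q = 1)) ∧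
    (∀ p q : Fin n × Fin t, tensorJ t X p q = tensorJ t Y p q * lam p.1 * mu q.1) ∧
    (∏ p : Fin n × Fin t, (lam p.1 * mu p.1) = (∏ i, lam i * mu i) ^ t) ∧
    perm (tensorJ t X) = perm (tensorJ t Y) * (∏ i, lam i * mu i) ^ t := by
  have ht' : (t : ℝ) ≠ 0 := Nat.cast_ne_zero.mpr ht.ne'
  have hds : (∀ p q, 0 ≤ tensorJ t Y p q) ∧
      (∀ p, ∑ q, tensorJ t Y p q = 1) ∧ (∀ q, ∑ p, tensorJ t Y p q = 1) := by
    refine ⟨fun p q => div_nonneg (hYnonneg _ _) (Nat.cast_nonneg t), fun p => ?_, fun q => ?_⟩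
    · rw [Fintype.sum_prod_type]
      simp only [tensorJ]
      have h : ∀ a : ℝ, (t:ℝ) * (a / t) = a := fun a => by field_simp
      simp [h, hYrow]
    · rw [Fintype.sum_prod_type]
      simp only [tensorJ]
      have h : ∀ a : ℝ, (t:ℝ) * (a / t) = a := fun a => by field_simp
      simp [h, hYcol]
  have hsc : ∀ p q : Fin n × Fin t, tensorJ t X p q = tensorJ t Y p q * lam p.1 * mu q.1 := by
    intro p q
    simp only [tensorJ, hscal]
    ring
  have hprod : ∏ p : Fin n × Fin t, (lam p.1 * mu p.1) = (∏ i, lam i * mu i) ^ t :=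
    prod_fst_pow (t := t) (fun i => lam i * mu i)
  refine ⟨hds, hsc, hprod, ?_⟩
  unfold perm
  rw [Finset.sum_mul]
  refine Finset.sum_congr rfl fun σ _ => ?_
  calc ∏ p : Fin n × Fin t, tensorJ t X p (σ p)
      = ∏ p : Fin n × Fin t, (tensorJ t Y p (σ p) * (lam p.1 * mu (σ p).1)) := by
        refine Finset.prod_congr rfl fun p _ => ?_
        rw [hsc]; ring
    _ = (∏ p : Fin n × Fin t, tensorJ t Y p (σ p)) *
        ((∏ p : Fin n × Fin t, lam p.1) * ∏ p : Fin n × Fin t, mu (σ p).1) := by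
        rw [Finset.prod_mul_distrib, Finset.prod_mul_distrib]
    _ = (∏ p : Fin n × Fin t, tensorJ t Y p (σ p)) *
        ((∏ p : Fin n × Fin t, lam p.1) * ∏ p : Fin n × Fin t, mu p.1) := by
        rw [Equiv.prod_comp σ (fun p : Fin n × Fin t => mu p.1)]
    _ = (∏ p : Fin n × Fin t, tensorJ t Y p (σ p)) * (∏ i, lam i * mu i) ^ t := by
        rw [← hprod, ← Finset.prod_mul_distrib]
end

section
/- Suppose 1 ≤ a_{ij} ≤ 2 for all entries of an n×n matrix A (n ≥ 3), and let B be the doubly stochastic scaling of A. Then every entry of B is at most γ/n for some absolute constant γ (e.g., γ = 32 works). -/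
/-!
Write `B = D_r A D_c` with `r = λ⁻¹`, `c = μ⁻¹` and `R = ∑ r`, `C = ∑ c`. Since the entries of `A`
lie in `[a, b]`, each row sum of `B` lies between `a r_k C` and `b r_k C`, and each column sum
between `a c_l R` and `b c_l R`. Row sums equal to `1` give `r_k ≤ 1 / (a C)` and, summed over
all rows, `n ≤ b R C`; the column sum at `l` gives `c_l ≤ 1 / (a R)`. Hence
`b_{kl} ≤ b r_k c_l ≤ b / (a² R C) ≤ b² / (a² n)`, which is `4 / n` for `a = 1`, `b = 2`.
-/

open Finset

section

variable {ι : Type*} [Fintype ι] {a b : ℝ}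

lemma mul_sum_le_sum_mul_of_le {x w : ι → ℝ} (hw : ∀ j, 0 ≤ w j) (hx : ∀ j, a ≤ x j) :
    a * ∑ j, w j ≤ ∑ j, x j * w j := by
  rw [mul_sum]
  exact sum_le_sum fun j _ => mul_le_mul_of_nonneg_right (hx j) (hw j)

lemma sum_mul_le_mul_sum_of_le {x w : ι → ℝ} (hw : ∀ j, 0 ≤ w j) (hx : ∀ j, x j ≤ b) :
    ∑ j, x j * w j ≤ b * ∑ j, w j := by
  rw [mul_sum]
  exact sum_le_sum fun j _ => mul_le_mul_of_nonneg_right (hx j) (hw j)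

variable {A : Matrix ι ι ℝ} {r c : ι → ℝ}

lemma scaled_row_sum_bounds {i : ι} (hr : 0 ≤ r i) (hc : ∀ j, 0 ≤ c j)
    (ha : ∀ j, a ≤ A i j) (hb : ∀ j, A i j ≤ b) (hrow : ∑ j, A i j * r i * c j = 1) :
    a * r i * ∑ j, c j ≤ 1 ∧ 1 ≤ b * r i * ∑ j, c j := by
  have hfactor : ∑ j, A i j * r i * c j = r i * ∑ j, A i j * c j := by
    rw [mul_sum]
    exact sum_congr rfl fun j _ => by ring
  rw [hfactor] at hrow
  constructor
  · calc a * r i * ∑ j, c j = r i * (a * ∑ j, c j) := by ring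
      _ ≤ r i * ∑ j, A i j * c j := by gcongr; exact mul_sum_le_sum_mul_of_le hc ha
      _ = 1 := hrow
  · calc 1 = r i * ∑ j, A i j * c j := hrow.symm
      _ ≤ r i * (b * ∑ j, c j) := by gcongr; exact sum_mul_le_mul_sum_of_le hc hb
      _ = b * r i * ∑ j, c j := by ring

lemma scaled_col_sum_bounds {j : ι} (hr : ∀ i, 0 ≤ r i) (hc : 0 ≤ c j)
    (ha : ∀ i, a ≤ A i j) (hb : ∀ i, A i j ≤ b) (hcol : ∑ i, A i j * r i * c j = 1) :
    a * c j * ∑ i, r i ≤ 1 ∧ 1 ≤ b * c j * ∑ i, r i := by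
  simp_rw [mul_right_comm _ (r _) (c j)] at hcol
  exact scaled_row_sum_bounds (A := A.transpose) hc hr ha hb hcol

theorem scaled_entry_le_sq_div_card (ha : 0 < a) (hAa : ∀ i j, a ≤ A i j)
    (hAb : ∀ i j, A i j ≤ b) (hr : ∀ i, 0 ≤ r i) (hc : ∀ j, 0 ≤ c j)
    (hrow : ∀ i, ∑ j, A i j * r i * c j = 1) (hcol : ∀ j, ∑ i, A i j * r i * c j = 1)
    (k l : ι) :
    A k l * r k * c l ≤ b ^ 2 / (a ^ 2 * Fintype.card ι) := by
  set R := ∑ i, r i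
  set C := ∑ j, c j
  have hrow_bounds i := scaled_row_sum_bounds (hr i) hc (hAa i) (hAb i) (hrow i)
  have hcol_l := (scaled_col_sum_bounds hr (hc l) (hAa · l) (hAb · l) (hcol l)).1
  have hb : 0 ≤ b := ha.le.trans ((hAa k l).trans (hAb k l))
  have hcard : (Fintype.card ι : ℝ) ≤ b * R * C := by
    calc (Fintype.card ι : ℝ) = ∑ _i : ι, (1 : ℝ) := by simp
      _ ≤ ∑ i, b * r i * C := sum_le_sum fun i _ => (hrow_bounds i).2
      _ = b * R * C := by rw [← sum_mul, ← mul_sum]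
  have hrc : a ^ 2 * Fintype.card ι * (r k * c l) ≤ b := by
    have hR : 0 ≤ R := sum_nonneg fun i _ => hr i
    have hC : 0 ≤ C := sum_nonneg fun j _ => hc j
    have := hr k
    have := hc l
    calc a ^ 2 * Fintype.card ι * (r k * c l) ≤ a ^ 2 * (b * R * C) * (r k * c l) := by gcongr
      _ = b * ((a * r k * C) * (a * c l * R)) := by ring
      _ ≤ b * 1 := by
          gcongr
          exact mul_le_one₀ (hrow_bounds k).1 (by positivity) hcol_l
      _ = b := mul_one b
  have hcard_pos : (0 : ℝ) < a ^ 2 * Fintype.card ι := by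
    have : Nonempty ι := ⟨k⟩
    positivity
  calc A k l * r k * c l = A k l * (r k * c l) := mul_assoc _ _ _
    _ ≤ b * (b / (a ^ 2 * Fintype.card ι)) := by
        gcongr
        · exact mul_nonneg (hr k) (hc l)
        · exact hAb k l
        · rw [le_div_iff₀ hcard_pos, mul_comm]; exact hrc
    _ = b ^ 2 / (a ^ 2 * Fintype.card ι) := by ring

end

theorem scaling_entries_small_general (n : ℕ)
    (A B : Matrix (Fin n) (Fin n) ℝ) (lam mu : Fin n → ℝ)
    (hA1 : ∀ i j, 1 ≤ A i j) (hA2 : ∀ i j, A i j ≤ 2)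
    (hlam : ∀ i, 0 < lam i) (hmu : ∀ j, 0 < mu j)
    (hscal : ∀ i j, A i j = B i j * lam i * mu j)
    (hBrow : ∀ i, ∑ j, B i j = 1) (hBcol : ∀ j, ∑ i, B i j = 1) :
    ∀ k l, B k l ≤ 32 / n := by
  intro k l
  have hB i j : B i j = A i j * (lam i)⁻¹ * (mu j)⁻¹ := by
    rw [hscal]
    field_simp [(hlam i).ne', (hmu j).ne']
  simp_rw [hB] at hBrow hBcol ⊢
  calc A k l * (lam k)⁻¹ * (mu l)⁻¹ ≤ 2 ^ 2 / (1 ^ 2 * Fintype.card (Fin n)) :=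
        scaled_entry_le_sq_div_card one_pos hA1 hA2 (fun i => (inv_pos.2 (hlam i)).le)
          (fun j => (inv_pos.2 (hmu j)).le) hBrow hBcol k l
    _ = 4 / n := by simp; norm_num
    _ ≤ 32 / n := by gcongr; norm_num

/-- If `1 ≤ a_{ij} ≤ 2` for all entries of an `n × n` matrix `A` (`n ≥ 3`) and
`B` is the doubly stochastic scaling of `A`, then every entry of `B` is at most
`γ/n` for the absolute constant `γ = 32`. -/
theorem scaling_entries_small (n : ℕ) (hn : 3 ≤ n)
    (A B : Matrix (Fin n) (Fin n) ℝ) (lam mu : Fin n → ℝ)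
    (hA1 : ∀ i j, 1 ≤ A i j) (hA2 : ∀ i j, A i j ≤ 2)
    (hlam : ∀ i, 0 < lam i) (hmu : ∀ j, 0 < mu j)
    (hscal : ∀ i j, A i j = B i j * lam i * mu j)
    (hBnonneg : ∀ i j, 0 ≤ B i j)
    (hBrow : ∀ i, ∑ j, B i j = 1) (hBcol : ∀ j, ∑ i, B i j = 1) :
    ∀ k l, B k l ≤ 32 / n :=
  scaling_entries_small_general n A B lam mu hA1 hA2 hlam hmu hscal hBrow hBcol
end

section
/- For a fixed n, the ratio |Σ(n,t)|/t^{(n−1)²} converges to a positive limit as t → ∞; this limit equals the volume ρ(n) of the polytope of n×n doubly stochastic matrices (suitably normalized). -/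
/-!
Forgetting the last row and column identifies `Σ(m+1, t)` with the points of `t⁻¹ ℤ^{m×m}` in a
fixed polytope `K ⊆ ℝ^{m×m}`, the image of the Birkhoff polytope under this projection. Counting
those points and dividing by `t^{m²}` is a Riemann sum for the volume of `K`; it converges because
the boundary of the convex set `K` is null, and the limit is positive because `K` contains a ball
around the image of the barycentre `J / (m+1)`.
-/

open Filter MeasureTheory Set Pointwise

section LatticeCount

variable {ι : Type*} [Fintype ι]

lemma mem_inv_smul_span_basisFun_iff {t : ℝ} (ht : t ≠ 0) {x : ι → ℝ} :
    x ∈ t⁻¹ • (Submodule.span ℤ (range (Pi.basisFun ℝ ι)) : Set (ι → ℝ)) ↔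
      ∀ p, t * x p ∈ range (Int.cast : ℤ → ℝ) := by
  rw [Set.mem_smul_set_iff_inv_smul_mem₀ (inv_ne_zero ht), inv_inv, SetLike.mem_coe,
    Module.Basis.mem_span_iff_repr_mem]
  simp

lemma card_inter_inv_smul_span_eq_ncard {s : Set (ι → ℝ)} (hs : ∀ x ∈ s, ∀ p, 0 ≤ x p)
    {t : ℕ} (ht : t ≠ 0) :
    Nat.card ↑(s ∩ (t : ℝ)⁻¹ • (Submodule.span ℤ (range (Pi.basisFun ℝ ι)) : Set (ι → ℝ))) =
      {ν : ι → ℕ | (fun p => (ν p : ℝ) / t) ∈ s}.ncard := by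
  have ht' : (t : ℝ) ≠ 0 := Nat.cast_ne_zero.mpr ht
  refine (Set.BijOn.ncard_eq (f := fun ν p => (ν p : ℝ) / t) ⟨?_, ?_, ?_⟩).symm
  · refine fun ν hν => ⟨hν, (mem_inv_smul_span_basisFun_iff ht').2 fun p => ⟨ν p, ?_⟩⟩
    simp [mul_div_cancel₀ _ ht']
  · intro ν _ μ _ h
    funext p
    simpa [div_left_inj' ht'] using congrFun h p
  · rintro x ⟨hx, hxL⟩
    choose k hk using (mem_inv_smul_span_basisFun_iff ht').1 hxL
    have hx' : x = fun p => ((k p).toNat : ℝ) / t := by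
      funext p
      have h0 : (0 : ℝ) ≤ k p := hk p ▸ mul_nonneg (Nat.cast_nonneg t) (hs x hx p)
      rw [← Int.cast_natCast, Int.toNat_of_nonneg (Int.cast_nonneg_iff.1 h0), hk p,
        mul_div_cancel_left₀ _ ht']
    exact ⟨fun p => (k p).toNat, by simpa [← hx'] using hx, hx'.symm⟩

end LatticeCount

lemma sum_tsub_add_sum_eq_card_mul {α : Type*} [Fintype α] {f : α → ℕ} {t : ℕ}
    (hf : ∀ a, f a ≤ t) : ∑ a, (t - f a) + ∑ a, f a = Fintype.card α * t := by
  rw [Finset.sum_tsub_distrib _ fun a _ => hf a,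
    tsub_add_cancel_of_le (Finset.sum_le_sum fun a _ => hf a)]
  simp

section MagicSquares

def magicSquares (n t : ℕ) : Set (Matrix (Fin n) (Fin n) ℕ) :=
  {D | (∀ i, ∑ j, D i j = t) ∧ (∀ j, ∑ i, D i j = t)}

/-- The last inequality says that the corner entry `∑ p, ν p - (m - 1) * t` of the completed
square is nonnegative, stated without truncated subtraction. -/
def magicBlocks (m t : ℕ) : Set (Fin m × Fin m → ℕ) :=
  {ν | (∀ i, ∑ j, ν (i, j) ≤ t) ∧ (∀ j, ∑ i, ν (i, j) ≤ t) ∧ m * t ≤ ∑ p, ν p + t}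

variable {m t : ℕ}

def topLeftBlock (D : Matrix (Fin (m + 1)) (Fin (m + 1)) ℕ) : Fin m × Fin m → ℕ :=
  fun p => D p.1.castSucc p.2.castSucc

def completeBlock (t : ℕ) (ν : Fin m × Fin m → ℕ) : Matrix (Fin (m + 1)) (Fin (m + 1)) ℕ :=
  Fin.lastCases (Fin.lastCases (∑ p, ν p + t - m * t) fun j => t - ∑ i, ν (i, j))
    fun i => Fin.lastCases (t - ∑ j, ν (i, j)) fun j => ν (i, j)

lemma topLeftBlock_completeBlock (ν : Fin m × Fin m → ℕ) :
    topLeftBlock (completeBlock t ν) = ν := by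
  funext p
  simp [topLeftBlock, completeBlock]

lemma topLeftBlock_sums {D : Matrix (Fin (m + 1)) (Fin (m + 1)) ℕ}
    (hD : D ∈ magicSquares (m + 1) t) :
    (∀ i, ∑ j, topLeftBlock D (i, j) + D i.castSucc (Fin.last m) = t) ∧
    (∀ j, ∑ i, topLeftBlock D (i, j) + D (Fin.last m) j.castSucc = t) ∧
    ∑ i : Fin m, D i.castSucc (Fin.last m) + D (Fin.last m) (Fin.last m) = t ∧
    ∑ p, topLeftBlock D p + ∑ i : Fin m, D i.castSucc (Fin.last m) = m * t := by
  obtain ⟨hrow, hcol⟩ := hD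
  refine ⟨fun i => ?_, fun j => ?_, ?_, ?_⟩
  · simpa [topLeftBlock, Fin.sum_univ_castSucc] using hrow i.castSucc
  · simpa [topLeftBlock, Fin.sum_univ_castSucc] using hcol j.castSucc
  · simpa [Fin.sum_univ_castSucc] using hcol (Fin.last m)
  · simp [topLeftBlock, Fintype.sum_prod_type, ← Finset.sum_add_distrib, ← Fin.sum_univ_castSucc,
      hrow]

lemma topLeftBlock_mem_magicBlocks {D : Matrix (Fin (m + 1)) (Fin (m + 1)) ℕ}
    (hD : D ∈ magicSquares (m + 1) t) : topLeftBlock D ∈ magicBlocks m t := by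
  obtain ⟨hrow, hcol, hlast, htotal⟩ := topLeftBlock_sums hD
  exact ⟨fun i => (hrow i).symm ▸ Nat.le_add_right _ _,
    fun j => (hcol j).symm ▸ Nat.le_add_right _ _, by omega⟩

lemma completeBlock_mem_magicSquares {ν : Fin m × Fin m → ℕ} (hν : ν ∈ magicBlocks m t) :
    completeBlock t ν ∈ magicSquares (m + 1) t := by
  obtain ⟨hrow, hcol, htotal⟩ := hν
  have hrows := sum_tsub_add_sum_eq_card_mul hrow
  have hcols := sum_tsub_add_sum_eq_card_mul hcol
  rw [← Fintype.sum_prod_type] at hrows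
  rw [← Fintype.sum_prod_type_right] at hcols
  simp only [Fintype.card_fin] at hrows hcols
  refine ⟨Fin.lastCases ?_ fun i => ?_, Fin.lastCases ?_ fun j => ?_⟩ <;>
    simp only [completeBlock, Fin.sum_univ_castSucc, Fin.lastCases_last, Fin.lastCases_castSucc]
  · omega
  · exact Nat.add_sub_of_le (hrow i)
  · omega
  · exact Nat.add_sub_of_le (hcol j)

lemma completeBlock_topLeftBlock {D : Matrix (Fin (m + 1)) (Fin (m + 1)) ℕ}
    (hD : D ∈ magicSquares (m + 1) t) : completeBlock t (topLeftBlock D) = D := by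
  obtain ⟨hrow, hcol, hlast, htotal⟩ := topLeftBlock_sums hD
  ext i j
  induction i using Fin.lastCases with
  | last =>
    induction j using Fin.lastCases with
    | last => simp only [completeBlock, Fin.lastCases_last]; omega
    | cast j => simp only [completeBlock, Fin.lastCases_last, Fin.lastCases_castSucc]; grind
  | cast i =>
    induction j using Fin.lastCases with
    | last => simp only [completeBlock, Fin.lastCases_last, Fin.lastCases_castSucc]; grind
    | cast j => simp [completeBlock, topLeftBlock]

lemma ncard_magicSquares : (magicSquares (m + 1) t).ncard = (magicBlocks m t).ncard :=
  Set.BijOn.ncard_eq <| Set.InvOn.bijOn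
    ⟨fun _ hD => completeBlock_topLeftBlock hD, fun ν _ => topLeftBlock_completeBlock ν⟩
    (fun _ => topLeftBlock_mem_magicBlocks) (fun _ => completeBlock_mem_magicSquares)

end MagicSquares

section BirkhoffBlock

variable (m : ℕ)

/-- The image of the Birkhoff polytope of `(m+1) × (m+1)` doubly stochastic matrices under
forgetting the last row and column; this projection is a unimodular affine bijection. -/
def birkhoffBlock : Set (Fin m × Fin m → ℝ) :=
  {x | (∀ p, 0 ≤ x p) ∧ (∀ i, ∑ j, x (i, j) ≤ 1) ∧ (∀ j, ∑ i, x (i, j) ≤ 1) ∧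
    (m : ℝ) ≤ ∑ p, x p + 1}

lemma birkhoffBlock_subset_Icc : birkhoffBlock m ⊆ Icc 0 1 := by
  rintro x ⟨hx0, hrow, -, -⟩
  refine ⟨hx0, fun p => ?_⟩
  calc x p ≤ ∑ j, x (p.1, j) :=
        Finset.single_le_sum (fun j _ => hx0 (p.1, j)) (Finset.mem_univ p.2)
    _ ≤ 1 := hrow p.1

lemma isBounded_birkhoffBlock : Bornology.IsBounded (birkhoffBlock m) :=
  (Metric.isBounded_Icc 0 1).subset (birkhoffBlock_subset_Icc m)

lemma convex_birkhoffBlock : Convex ℝ (birkhoffBlock m) := by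
  rintro x ⟨hx0, hxr, hxc, hxs⟩ y ⟨hy0, hyr, hyc, hys⟩ a b ha hb hab
  simp only [birkhoffBlock, mem_ofPred_eq, Pi.add_apply, Pi.smul_apply, smul_eq_mul,
    Finset.sum_add_distrib, ← Finset.mul_sum]
  refine ⟨fun p => by have := hx0 p; have := hy0 p; positivity, fun i => ?_, fun j => ?_, ?_⟩
  · nlinarith [hxr i, hyr i]
  · nlinarith [hxc j, hyc j]
  · nlinarith

lemma isClosed_birkhoffBlock : IsClosed (birkhoffBlock m) := by
  simp only [birkhoffBlock, ofPred_and, ofPred_forall]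
  refine .inter (isClosed_iInter fun p => ?_) <| .inter (isClosed_iInter fun i => ?_) <|
    .inter (isClosed_iInter fun j => ?_) ?_ <;>
  exact isClosed_le (by fun_prop) (by fun_prop)

-- `(m + 1)⁻¹` is the block of the barycentre of the Birkhoff polytope.
lemma closedBall_subset_birkhoffBlock :
    Metric.closedBall (fun _ => ((m : ℝ) + 1)⁻¹) (((m : ℝ) + 1)⁻¹ ^ 3) ⊆ birkhoffBlock m := by
  intro x hx
  set c := ((m : ℝ) + 1)⁻¹ with hc_def
  have hc : 0 < c := by positivity
  have hc1 : c ≤ 1 := inv_le_one_of_one_le₀ (by simp)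
  have hc3 : c ^ 3 ≤ c := pow_le_of_le_one hc.le hc1 (by norm_num)
  have hmc : m * c = 1 - c := by rw [hc_def]; field_simp; ring
  have hx : ∀ p, |x p - c| ≤ c ^ 3 := fun p =>
    (Real.dist_eq _ _).symm.trans_le ((dist_le_pi_dist x _ p).trans (Metric.mem_closedBall.1 hx))
  have hlo : ∀ p, c - c ^ 3 ≤ x p := fun p => by linarith [(abs_le.1 (hx p)).1]
  have hhi : ∀ p, x p ≤ c + c ^ 3 := fun p => by linarith [(abs_le.1 (hx p)).2]
  have hline : ∀ f : Fin m → Fin m × Fin m, ∑ k, x (f k) ≤ 1 := fun f =>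
    calc ∑ k, x (f k) ≤ ∑ _k : Fin m, (c + c ^ 3) := Finset.sum_le_sum fun k _ => hhi (f k)
      _ = 1 - c * (1 - c + c ^ 2) := by
        simp only [Finset.sum_const, Finset.card_univ, Fintype.card_fin, nsmul_eq_mul]
        linear_combination (1 + c ^ 2) * hmc
      _ ≤ 1 := by nlinarith
  refine ⟨fun p => by linarith [hlo p], fun i => hline fun j => (i, j),
    fun j => hline fun i => (i, j), ?_⟩
  calc (m : ℝ) ≤ m + c ^ 2 * (2 - c) := by nlinarith
    _ = ∑ _p : Fin m × Fin m, (c - c ^ 3) + 1 := by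
        simp only [Finset.sum_const, Finset.card_univ, Fintype.card_prod, Fintype.card_fin,
          nsmul_eq_mul, Nat.cast_mul]
        linear_combination (-(m * (1 - c ^ 2)) + (1 + c - c ^ 2)) * hmc
    _ ≤ ∑ p, x p + 1 := by gcongr with p; exact hlo p

lemma volume_real_birkhoffBlock_pos : 0 < volume.real (birkhoffBlock m) :=
  ENNReal.toReal_pos
    ((Metric.measure_closedBall_pos volume _ (by positivity)).trans_le
      (measure_mono (closedBall_subset_birkhoffBlock m))).ne'
    (isBounded_birkhoffBlock m).measure_lt_top.ne

lemma div_mem_birkhoffBlock_iff {t : ℕ} (ht : t ≠ 0) {ν : Fin m × Fin m → ℕ} :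
    (fun p => (ν p : ℝ) / t) ∈ birkhoffBlock m ↔ ν ∈ magicBlocks m t := by
  have ht' : (0 : ℝ) < t := by positivity
  have hscale : ∀ a b : ℕ, (a : ℝ) ≤ b / t + 1 ↔ a * t ≤ b + t := fun a b => by
    rw [div_add_one ht'.ne', le_div_iff₀ ht']
    exact_mod_cast Iff.rfl
  simp only [birkhoffBlock, magicBlocks, mem_ofPred_eq, ← Finset.sum_div, div_le_one ht',
    ← Nat.cast_sum, Nat.cast_le, hscale]
  simp [div_nonneg]

lemma card_birkhoffBlock_inter_eq_ncard_magicSquares {t : ℕ} (ht : t ≠ 0) :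
    Nat.card ↑(birkhoffBlock m ∩
      (t : ℝ)⁻¹ • (Submodule.span ℤ (range (Pi.basisFun ℝ (Fin m × Fin m))) : Set _)) =
      (magicSquares (m + 1) t).ncard := by
  rw [card_inter_inv_smul_span_eq_ncard (fun x hx => (birkhoffBlock_subset_Icc m hx).1) ht,
    ncard_magicSquares]
  congr
  ext ν
  exact div_mem_birkhoffBlock_iff m ht

end BirkhoffBlock

/-- For fixed `n`, the number `|Σ(n,t)|` of `n × n` magic squares with line sum
`t` satisfies `|Σ(n,t)| / t^{(n−1)²} → ρ(n) > 0` as `t → ∞`; the limit `ρ(n)` is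
the (suitably normalized) volume of the Birkhoff polytope of `n × n` doubly
stochastic matrices, i.e. the leading Ehrhart coefficient. -/
theorem magic_squares_ehrhart_limit (n : ℕ) (hn : 0 < n) :
    ∃ ρ : ℝ, 0 < ρ ∧
      Tendsto (fun t : ℕ =>
          (Set.ncard {D : Matrix (Fin n) (Fin n) ℕ |
              (∀ i, ∑ j, D i j = t) ∧ (∀ j, ∑ i, D i j = t)} : ℝ) /
            (t : ℝ) ^ ((n - 1) ^ 2))
        atTop (nhds ρ) := by
  obtain ⟨m, rfl⟩ : ∃ m, n = m + 1 := ⟨n - 1, by omega⟩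
  refine ⟨volume.real (birkhoffBlock m), volume_real_birkhoffBlock_pos m, ?_⟩
  have hlim := tendsto_card_div_pow_atTop_volume (birkhoffBlock m) (isBounded_birkhoffBlock m)
    (isClosed_birkhoffBlock m).measurableSet ((convex_birkhoffBlock m).addHaar_frontier volume)
  rw [Fintype.card_prod, Fintype.card_fin, ← sq] at hlim
  rw [add_tsub_cancel_right]
  refine hlim.congr' ?_
  filter_upwards [eventually_ne_atTop 0] with t ht
  rw [card_birkhoffBlock_inter_eq_ncard_magicSquares m ht]
  rfl
end
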